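/- arXiv:2508.06619 — 9 statements merged into one kernel-verified Lean document; each statement's English description precedes it below -/
import Mathlib

section
/- Fix any z ∈ 𝒜 and define φ : 𝒜 → ℝ by φ(a) = ∫₀¹ Σ_{j=1}^N (∂u_j/∂a_j)(z + r(a − z)) · (a_j − z_j) dr. Then φ is an α-potential function of the game with α = (a_δ²/2) · max over players i and action profiles a ∈ 𝒜 of Σ_{j=1}^N |(∂²u_i/∂a_i∂a_j)(a) − (∂²u_j/∂a_j∂a_i)(a)|; that is, for every player i, every a ∈ 𝒜 and every a_i' ∈ 𝒜_i, |[u_i(a) − u_i(a_i', a_{−i})] − [φ(a) − φ(a_i', a_{−i})]| ≤ α. -/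
open Function

/-- Partial derivative of `f : ℝ^N → ℝ` with respect to coordinate `j` at the point `a`. -/
noncomputable def pd {N : ℕ} (j : Fin N) (f : (Fin N → ℝ) → ℝ) (a : Fin N → ℝ) : ℝ :=
  deriv (fun t => f (Function.update a j t)) (a j)

/-!
Write `F j = ∂u_j/∂a_j`, so that `φ` is the integral of the 1-form `Σ_j F_j da_j` along the
segment from `z`. Differentiating under the integral sign and integrating by parts in the radial
parameter shows that the `i`-th partial derivative of `u_i - φ` at `x` is
`∫₀¹ r Σ_j (∂_j F_i - ∂_i F_j)(z + r(x - z)) (x_j - z_j) dr`, which is at most `a_δ M / 2` in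
absolute value when `M` bounds `Σ_j |∂_j F_i - ∂_i F_j|` on `𝒜`. The mean value theorem along
the segment from `(a_i', a_{-i})` to `a`, of length at most `a_δ`, gives the bound `a_δ² M / 2`.
-/

open MeasureTheory Set

theorem hasDerivAt_intervalIntegral_of_continuous {E : Type*} [NormedAddCommGroup E]
    [NormedSpace ℝ E] {F F' : ℝ → ℝ → E} {a b : ℝ} (hF : Continuous (uncurry F))
    (hF' : Continuous (uncurry F')) (hderiv : ∀ t r, HasDerivAt (fun t => F t r) (F' t r) t)
    (t₀ : ℝ) : HasDerivAt (fun t => ∫ r in a..b, F t r) (∫ r in a..b, F' t₀ r) t₀ := by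
  obtain ⟨C, hC⟩ := ((isCompact_closedBall t₀ 1).prod (isCompact_uIcc (a := a) (b := b))
    ).exists_bound_of_continuousOn hF'.continuousOn
  have hFt : ∀ t, Continuous (F t) := fun t => hF.comp (Continuous.prodMk_right t)
  refine (intervalIntegral.hasDerivAt_integral_of_dominated_loc_of_deriv_le
    (bound := fun _ => C) (Metric.ball_mem_nhds t₀ one_pos)
    (Filter.Eventually.of_forall fun t => (hFt t).aestronglyMeasurable)
    ((hFt t₀).intervalIntegrable _ _)
    (hF'.comp (Continuous.prodMk_right t₀)).aestronglyMeasurable ?_ intervalIntegrable_const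
    (Filter.Eventually.of_forall fun r _ t _ => hderiv t r)).2
  exact Filter.Eventually.of_forall fun r hr t ht =>
    hC (t, r) ⟨Metric.ball_subset_closedBall ht, uIoc_subset_uIcc hr⟩

theorem HasLineDerivAt.hasDerivAt_add_smul {E F : Type*} [NormedAddCommGroup E] [NormedSpace ℝ E]
    [NormedAddCommGroup F] [NormedSpace ℝ F] {f : E → F} {f' : F} {x v : E} {s : ℝ}
    (hf : HasLineDerivAt ℝ f f' (x + s • v) v) : HasDerivAt (fun t => f (x + t • v)) f' s := by
  have h := HasDerivAt.comp_add_const s (-s) (f := fun t => f (x + s • v + t • v))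
    (by rw [add_neg_cancel]; exact hf)
  convert h using 3 with t
  module

theorem norm_sub_le_of_hasLineDerivAt_segment {E F : Type*} [NormedAddCommGroup E]
    [NormedSpace ℝ E] [NormedAddCommGroup F] [NormedSpace ℝ F] {f : E → F} {f' : ℝ → F}
    {x v : E} {C : ℝ} (hf : ∀ t ∈ Icc (0 : ℝ) 1, HasLineDerivAt ℝ f (f' t) (x + t • v) v)
    (hC : ∀ t ∈ Icc (0 : ℝ) 1, ‖f' t‖ ≤ C) : ‖f (x + v) - f x‖ ≤ C := by
  have := norm_image_sub_le_of_norm_deriv_le_segment' (f := fun t => f (x + t • v))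
    (fun t ht => (hf t ht).hasDerivAt_add_smul.hasDerivWithinAt)
    (fun t ht => hC t (Ico_subset_Icc_self ht)) 1 (right_mem_Icc.2 zero_le_one)
  simpa using this

section LinePotential

variable {E : Type*} [NormedAddCommGroup E] [NormedSpace ℝ E]

noncomputable def linePotential (ω : E → E →L[ℝ] ℝ) (z y : E) : ℝ :=
  ∫ r in (0:ℝ)..1, ω (z + r • (y - z)) (y - z)

variable {ω : E → E →L[ℝ] ℝ}

theorem integral_apply_add_smul_eq (hω : ContDiff ℝ 1 ω) (z w v : E) :
    ∫ r in (0:ℝ)..1, ω (z + r • w) v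
      = ω (z + w) v - ∫ r in (0:ℝ)..1, r * fderiv ℝ ω (z + r • w) w v := by
  have hω₁ := hω.continuous
  have hω₂ := hω.continuous_fderiv one_ne_zero
  have h₁ : Continuous fun r : ℝ => ω (z + r • w) v := by fun_prop
  have h₂ : Continuous fun r : ℝ => r * fderiv ℝ ω (z + r • w) w v := by fun_prop
  have hderiv : ∀ r : ℝ, HasDerivAt (fun r => r * ω (z + r • w) v)
      (ω (z + r • w) v + r * fderiv ℝ ω (z + r • w) w v) r := fun r => by
    have hpath : HasDerivAt (fun r : ℝ => z + r • w) w r := by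
      simpa using ((hasDerivAt_id r).smul_const w).const_add z
    have hω' := (hω.differentiable one_ne_zero _).hasFDerivAt.comp_hasDerivAt r hpath
    simpa using (hasDerivAt_id' r).fun_mul (hω'.clm_apply (hasDerivAt_const r v))
  have hFTC := intervalIntegral.integral_eq_sub_of_hasDerivAt (fun r _ => hderiv r)
    ((h₁.add h₂).intervalIntegrable 0 1)
  rw [intervalIntegral.integral_add (h₁.intervalIntegrable 0 1) (h₂.intervalIntegrable 0 1)]
    at hFTC
  simp only [one_smul, one_mul, zero_mul, sub_zero] at hFTC
  linarith

theorem hasLineDerivAt_linePotential (hω : ContDiff ℝ 1 ω) (z y v : E) :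
    HasLineDerivAt ℝ (linePotential ω z)
      (ω y v + ∫ r in (0:ℝ)..1, r * (fderiv ℝ ω (z + r • (y - z)) v (y - z)
        - fderiv ℝ ω (z + r • (y - z)) (y - z) v)) y v := by
  have hω₁ := hω.continuous
  have hω₂ := hω.continuous_fderiv one_ne_zero
  have hderiv : ∀ t r : ℝ, HasDerivAt (fun t => ω (z + r • (y + t • v - z)) (y + t • v - z))
      (fderiv ℝ ω (z + r • (y + t • v - z)) (r • v) (y + t • v - z)
        + ω (z + r • (y + t • v - z)) v) t := fun t r => by
    have hy : HasDerivAt (fun t : ℝ => y + t • v - z) v t := by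
      simpa using (((hasDerivAt_id t).smul_const v).const_add y).sub_const z
    exact ((hω.differentiable one_ne_zero _).hasFDerivAt.comp_hasDerivAt t
      ((hy.const_smul r).const_add z)).clm_apply hy
  have h := hasDerivAt_intervalIntegral_of_continuous (a := 0) (b := 1) (by fun_prop)
    (by fun_prop) hderiv 0
  have h₁ : Continuous fun r : ℝ => r * fderiv ℝ ω (z + r • (y - z)) v (y - z) := by fun_prop
  have h₂ : Continuous fun r : ℝ => r * fderiv ℝ ω (z + r • (y - z)) (y - z) v := by fun_prop
  have h₃ : Continuous fun r : ℝ => ω (z + r • (y - z)) v := by fun_prop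
  simp only [zero_smul, add_zero, map_smul, FunLike.coe_smul, Pi.smul_apply, smul_eq_mul] at h
  rw [intervalIntegral.integral_add (h₁.intervalIntegrable 0 1) (h₃.intervalIntegrable 0 1),
    integral_apply_add_smul_eq hω, add_sub_cancel] at h
  simp_rw [HasLineDerivAt, mul_sub]
  rw [intervalIntegral.integral_sub (h₁.intervalIntegrable 0 1) (h₂.intervalIntegrable 0 1)]
  convert h using 1
  · rfl
  · abel

end LinePotential

section CoordForm

variable {ι : Type*} [Fintype ι]

noncomputable def coordForm (F : ι → (ι → ℝ) → ℝ) (x : ι → ℝ) : (ι → ℝ) →L[ℝ] ℝ :=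
  ∑ j, F j x • ContinuousLinearMap.proj j

variable {F : ι → (ι → ℝ) → ℝ}

@[simp]
theorem coordForm_apply (x v : ι → ℝ) : coordForm F x v = ∑ j, F j x * v j := by
  simp [coordForm]

theorem contDiff_coordForm {n : WithTop ℕ∞} (hF : ∀ j, ContDiff ℝ n (F j)) :
    ContDiff ℝ n (coordForm F) :=
  ContDiff.sum fun j _ => (hF j).smul contDiff_const

theorem fderiv_coordForm_apply {x : ι → ℝ} (hF : ∀ j, DifferentiableAt ℝ (F j) x) (v w : ι → ℝ) :
    fderiv ℝ (coordForm F) x v w = ∑ j, fderiv ℝ (F j) x v * w j := by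
  have : HasFDerivAt (coordForm F)
      (∑ j, (fderiv ℝ (F j) x).smulRight (ContinuousLinearMap.proj j)) x :=
    HasFDerivAt.fun_sum fun j _ => (hF j).hasFDerivAt.smul_const (F := (ι → ℝ) →L[ℝ] ℝ) _
  simp [this.fderiv]

end CoordForm

section PartialDeriv

variable {N : ℕ} {f : (Fin N → ℝ) → ℝ}

theorem pd_eq_fderiv {x : Fin N → ℝ} (hf : DifferentiableAt ℝ f x) (j : Fin N) :
    pd j f x = fderiv ℝ f x (Pi.single j 1) :=
  (hf.hasFDerivAt.comp_hasDerivAt_of_eq (x j) (hasDerivAt_update x j (x j))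
    (update_eq_self j x).symm).deriv

theorem fderiv_single_eq_mul_pd {x : Fin N → ℝ} (hf : DifferentiableAt ℝ f x) (j : Fin N)
    (d : ℝ) : fderiv ℝ f x (Pi.single j d) = d * pd j f x := by
  rw [pd_eq_fderiv hf, ← smul_eq_mul, ← map_smul, ← Pi.single_smul, smul_eq_mul, mul_one]

theorem ContDiff.pd {n : WithTop ℕ∞} (hf : ContDiff ℝ (n + 1) f) (j : Fin N) :
    ContDiff ℝ n (_root_.pd j f) := by
  have : _root_.pd j f = fun x => fderiv ℝ f x (Pi.single j 1) :=
    funext fun x => pd_eq_fderiv (hf.differentiable (by simp) x) j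
  exact this ▸ (hf.fderiv_right le_rfl).clm_apply contDiff_const

theorem fderiv_coordForm_single_sub_swap {F : Fin N → (Fin N → ℝ) → ℝ} {x : Fin N → ℝ}
    (hF : ∀ j, DifferentiableAt ℝ (F j) x) (i : Fin N) (d : ℝ) (w : Fin N → ℝ) :
    fderiv ℝ (coordForm F) x (Pi.single i d) w - fderiv ℝ (coordForm F) x w (Pi.single i d)
      = d * ∑ j, (pd i (F j) x - pd j (F i) x) * w j := by
  have hw : fderiv ℝ (F i) x w = ∑ j, w j * pd j (F i) x := by
    conv_lhs => rw [← Finset.univ_sum_single w]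
    simp [map_sum, fderiv_single_eq_mul_pd (hF i)]
  simp only [fderiv_coordForm_apply hF, fderiv_single_eq_mul_pd (hF _), Pi.single_apply,
    mul_ite, mul_zero, Finset.sum_ite_eq', Finset.mem_univ, if_true, hw]
  rw [Finset.mul_sum, Finset.sum_mul, ← Finset.sum_sub_distrib]
  exact Finset.sum_congr rfl fun j _ => by ring

end PartialDeriv

theorem abs_sub_le_sSup_abs_sub {ι : Type*} [Fintype ι] {lo hi : ι → ℝ} {k : ι} {x y : ℝ}
    (hx : x ∈ Icc (lo k) (hi k)) (hy : y ∈ Icc (lo k) (hi k)) :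
    |x - y| ≤
      sSup {d : ℝ | ∃ i, ∃ x ∈ Icc (lo i) (hi i), ∃ y ∈ Icc (lo i) (hi i), d = |x - y|} := by
  refine le_csSup ⟨∑ i, |hi i - lo i|, ?_⟩ ⟨k, x, hx, y, hy, rfl⟩
  rintro _ ⟨i, x, hx, y, hy, rfl⟩
  calc |x - y| ≤ |hi i - lo i| := (Real.dist_le_of_mem_Icc hx hy).trans (le_abs_self _)
    _ ≤ ∑ i, |hi i - lo i| :=
      Finset.single_le_sum (f := fun i => |hi i - lo i|) (fun _ _ => abs_nonneg _)
        (Finset.mem_univ i)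

theorem le_sSup_of_isCompact {ι X : Type*} [Finite ι] [TopologicalSpace X] {K : Set X}
    (hK : IsCompact K) {f : ι → X → ℝ} (hf : ∀ i, Continuous (f i)) {i : ι} {x : X}
    (hx : x ∈ K) : f i x ≤ sSup {s : ℝ | ∃ i, ∃ a ∈ K, s = f i a} := by
  refine le_csSup ?_ ⟨i, x, hx, rfl⟩
  refine ((finite_univ.bddAbove_biUnion.2 fun i _ =>
    hK.bddAbove_image (hf i).continuousOn)).mono ?_
  rintro _ ⟨i, a, ha, rfl⟩
  exact mem_biUnion (mem_univ i) ⟨a, ha, rfl⟩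

theorem abs_integral_mul_le_half {g : ℝ → ℝ} {K : ℝ} (hK : ∀ r ∈ Icc (0 : ℝ) 1, |g r| ≤ K) :
    |∫ r in (0:ℝ)..1, r * g r| ≤ K / 2 := by
  have h := intervalIntegral.norm_integral_le_of_norm_le zero_le_one (μ := volume)
    (f := fun r => r * g r) (g := fun r => r * K) (ae_of_all _ fun r hr => by
      rw [norm_mul, Real.norm_of_nonneg hr.1.le]
      exact mul_le_mul_of_nonneg_left (hK r (Ioc_subset_Icc_self hr)) hr.1.le)
    ((by fun_prop : Continuous fun r : ℝ => r * K).intervalIntegrable 0 1)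
  rw [intervalIntegral.integral_mul_const, integral_id] at h
  simpa [div_eq_inv_mul] using h

theorem abs_mul_integral_sum_le {ι : Type*} [Fintype ι] {g : ℝ → ι → ℝ} {w : ι → ℝ}
    {d c M : ℝ} (hd : |d| ≤ c) (hw : ∀ j, |w j| ≤ c) (hg : ∀ r ∈ Icc (0 : ℝ) 1, ∑ j, |g r j| ≤ M) :
    |d * ∫ r in (0:ℝ)..1, r * ∑ j, g r j * w j| ≤ c ^ 2 / 2 * M := by
  have hc : 0 ≤ c := (abs_nonneg d).trans hd
  have hsum : ∀ r ∈ Icc (0 : ℝ) 1, |∑ j, g r j * w j| ≤ c * M := fun r hr =>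
    calc |∑ j, g r j * w j| ≤ ∑ j, |g r j| * c := by
          refine (Finset.abs_sum_le_sum_abs _ _).trans (Finset.sum_le_sum fun j _ => ?_)
          rw [abs_mul]
          exact mul_le_mul_of_nonneg_left (hw j) (abs_nonneg _)
      _ ≤ c * M := by rw [← Finset.sum_mul, mul_comm]; exact mul_le_mul_of_nonneg_left (hg r hr) hc
  rw [abs_mul]
  calc |d| * |∫ r in (0:ℝ)..1, r * ∑ j, g r j * w j| ≤ c * (c * M / 2) :=
        mul_le_mul hd (abs_integral_mul_le_half hsum) (abs_nonneg _) hc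
    _ = c ^ 2 / 2 * M := by ring

theorem hasLineDerivAt_sub_linePotential {N : ℕ} {u : Fin N → (Fin N → ℝ) → ℝ}
    (hu : ∀ j, ContDiff ℝ 2 (u j)) (z x : Fin N → ℝ) (i : Fin N) (d : ℝ) :
    HasLineDerivAt ℝ (fun y => u i y - linePotential (coordForm fun j => pd j (u j)) z y)
      (d * ∫ r in (0:ℝ)..1, r * ∑ j, (pd j (pd i (u i)) (z + r • (x - z))
        - pd i (pd j (u j)) (z + r • (x - z))) * (x j - z j)) x (Pi.single i d) := by
  have hF : ∀ j, ContDiff ℝ 1 (pd j (u j)) := fun j => (hu j).pd j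
  have hFd : ∀ j y, DifferentiableAt ℝ (pd j (u j)) y := fun j =>
    (hF j).differentiable one_ne_zero
  have hu' := ((hu i).differentiable two_ne_zero x).hasFDerivAt.hasLineDerivAt (Pi.single i d)
  have hφ := hasLineDerivAt_linePotential (contDiff_coordForm hF) z x (Pi.single i d)
  rw [HasLineDerivAt]
  convert HasDerivAt.fun_sub hu' hφ using 1
  simp only [fderiv_coordForm_single_sub_swap (fun j => hFd j _), coordForm_apply,
    fderiv_single_eq_mul_pd ((hu i).differentiable two_ne_zero x), Pi.single_apply, mul_ite,
    mul_zero, Finset.sum_ite_eq', Finset.mem_univ, if_true]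
  have hsign : ∀ r : ℝ,
      r * (d * ∑ j, (pd i (pd j (u j)) (z + r • (x - z)) - pd j (pd i (u i)) (z + r • (x - z)))
        * (x - z) j)
      = -(d * (r * ∑ j, (pd j (pd i (u i)) (z + r • (x - z)) - pd i (pd j (u j)) (z + r • (x - z)))
        * (x j - z j))) := fun r => by
    simp only [Pi.sub_apply, Finset.mul_sum, ← Finset.sum_neg_distrib]
    exact Finset.sum_congr rfl fun j _ => by ring
  simp only [hsign, intervalIntegral.integral_neg, intervalIntegral.integral_const_mul]
  ring

theorem alpha_potential_characterization_general
    {N : ℕ}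
    (lo hi : Fin N → ℝ)
    (u : Fin N → (Fin N → ℝ) → ℝ) (hu : ∀ i, ContDiff ℝ 2 (u i))
    (A : Set (Fin N → ℝ))
    (hA : A = Set.univ.pi fun i => Set.Icc (lo i) (hi i))
    (aδ : ℝ)
    (haδ : aδ = sSup {d : ℝ | ∃ i : Fin N, ∃ x ∈ Set.Icc (lo i) (hi i),
      ∃ y ∈ Set.Icc (lo i) (hi i), d = |x - y|})
    (z : Fin N → ℝ) (hz : z ∈ A)
    (φ : (Fin N → ℝ) → ℝ)
    (hφ : ∀ a, φ a =
      ∫ r in (0:ℝ)..1, ∑ j, pd j (u j) (fun k => z k + r * (a k - z k)) * (a j - z j))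
    (α : ℝ)
    (hα : α = aδ ^ 2 / 2 *
      sSup {x : ℝ | ∃ i : Fin N, ∃ a ∈ A,
        x = ∑ j, |pd j (pd i (u i)) a - pd i (pd j (u j)) a|}) :
    ∀ i : Fin N, ∀ a ∈ A, ∀ ai' ∈ Set.Icc (lo i) (hi i),
      |(u i a - u i (Function.update a i ai')) - (φ a - φ (Function.update a i ai'))| ≤ α := by
  intro i a ha ai' hai'
  set M := sSup {x : ℝ | ∃ i : Fin N, ∃ a ∈ A,
    x = ∑ j, |pd j (pd i (u i)) a - pd i (pd j (u j)) a|}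
  have hφ' : φ = linePotential (coordForm fun j => pd j (u j)) z :=
    funext fun y => by simp only [hφ, linePotential, coordForm_apply]; rfl
  have hAconv : Convex ℝ A := hA ▸ convex_pi fun k _ => convex_Icc (lo k) (hi k)
  have hAcomp : IsCompact A := hA ▸ isCompact_univ_pi fun k => isCompact_Icc
  have hcoord : ∀ x ∈ A, ∀ y ∈ A, ∀ k, |x k - y k| ≤ aδ := fun x hx y hy k => by
    rw [hA] at hx hy
    exact haδ ▸ abs_sub_le_sSup_abs_sub (hx k (mem_univ k)) (hy k (mem_univ k))
  have hpd₂ : ∀ i j, Continuous (pd j (pd i (u i))) := fun i j =>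
    (((hu i).pd (n := 1) i).pd (n := 0) j).continuous
  have hcurl : ∀ x ∈ A, ∑ j, |pd j (pd i (u i)) x - pd i (pd j (u j)) x| ≤ M := fun x hx =>
    le_sSup_of_isCompact hAcomp (f := fun i x => ∑ j, |pd j (pd i (u i)) x - pd i (pd j (u j)) x|)
      (fun i => by fun_prop) hx
  set b := update a i ai'
  have hb : b ∈ A := by
    rw [hA] at ha ⊢
    exact (update_mem_pi_iff_of_mem ha).2 fun _ => hai'
  have hab : a - b = Pi.single i (a i - ai') := by
    ext k
    rcases eq_or_ne k i with rfl | hk <;> simp [b, *]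
  have hsegment : ∀ t ∈ Icc (0 : ℝ) 1, b + t • (a - b) ∈ A := fun t ht =>
    hAconv.add_smul_sub_mem hb ha ht
  have key := norm_sub_le_of_hasLineDerivAt_segment (f := fun y => u i y - φ y) (x := b)
    (v := a - b) (fun t _ => hφ' ▸ hab ▸ hasLineDerivAt_sub_linePotential hu z _ i _)
    (fun t ht => hα ▸ abs_mul_integral_sum_le (by simpa [b] using hcoord a ha b hb i)
      (hcoord _ (hsegment t ht) z hz)
      fun r hr => hcurl _ (hAconv.add_smul_sub_mem hz (hsegment t ht) hr))
  rw [sub_sub_sub_comm]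
  simpa using key

/-- **Characterization of an α-potential function.**
Fix `z ∈ 𝒜` and define `φ(a) = ∫₀¹ Σ_j (∂u_j/∂a_j)(z + r(a − z)) · (a_j − z_j) dr`.
Then `φ` is an `α`-potential function of the game with
`α = (a_δ²/2) · max_{i, a ∈ 𝒜} Σ_j |(∂²u_i/∂a_i∂a_j)(a) − (∂²u_j/∂a_j∂a_i)(a)|`. -/
theorem alpha_potential_characterization
    {N : ℕ} (hN : 0 < N)
    (lo hi : Fin N → ℝ) (hlohi : ∀ i, lo i ≤ hi i)
    (u : Fin N → (Fin N → ℝ) → ℝ) (hu : ∀ i, ContDiff ℝ 2 (u i))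
    (A : Set (Fin N → ℝ))
    (hA : A = Set.univ.pi fun i => Set.Icc (lo i) (hi i))
    (aδ : ℝ)
    (haδ : aδ = sSup {d : ℝ | ∃ i : Fin N, ∃ x ∈ Set.Icc (lo i) (hi i),
      ∃ y ∈ Set.Icc (lo i) (hi i), d = |x - y|})
    (z : Fin N → ℝ) (hz : z ∈ A)
    (φ : (Fin N → ℝ) → ℝ)
    (hφ : ∀ a, φ a =
      ∫ r in (0:ℝ)..1, ∑ j, pd j (u j) (fun k => z k + r * (a k - z k)) * (a j - z j))
    (α : ℝ)
    (hα : α = aδ ^ 2 / 2 *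
      sSup {x : ℝ | ∃ i : Fin N, ∃ a ∈ A,
        x = ∑ j, |pd j (pd i (u i)) a - pd i (pd j (u j)) a|}) :
    ∀ i : Fin N, ∀ a ∈ A, ∀ ai' ∈ Set.Icc (lo i) (hi i),
      |(u i a - u i (Function.update a i ai')) - (φ a - φ (Function.update a i ai'))| ≤ α :=
  alpha_potential_characterization_general lo hi u hu A hA aδ haδ z hz φ hφ α hα
end

section
/- (Convergence of sequential best-response conditioned on utility improvement.) Let φ be an α-potential function of the game with α > 0, let φ_max := max_{a ∈ 𝒜} |φ(a)| < ∞, fix ε > 0, and set k̄ := ⌈2φ_max/ε⌉. Let {a^k}_{k=0}^∞ ⊆ 𝒜 be any sequence such that for every k: if there exists a player i with max_{a_i ∈ 𝒜_i} u_i(a_i, a^k_{−i}) > u_i(a^k) + α + ε, then a^{k+1} agrees with a^k in all coordinates except one such coordinate i, where a_i^{k+1} ∈ argmax_{a_i ∈ 𝒜_i} u_i(a_i, a^k_{−i}); otherwise a^{k+1} = a^k. Then for all k ≥ k̄, a^k = a^{k̄}, and a^{k̄} is an (α + ε)-Nash equilibrium of the game. -/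
open Function

/-- **Convergence of sequential best-response conditioned on utility improvement.**
Let `φ` be an `α`-potential function of the game with `α > 0`, `φ_max := max_{a ∈ 𝒜} |φ(a)|`,
`ε > 0` and `k̄ := ⌈2φ_max/ε⌉`. Along any sequence of the conditioned sequential best-response
dynamics, for all `k ≥ k̄` we have `a^k = a^{k̄}`, and `a^{k̄}` is an `(α + ε)`-Nash
equilibrium of the game. -/
theorem best_response_convergence
    {N : ℕ}
    (lo hi : Fin N → ℝ) (hlohi : ∀ i, lo i ≤ hi i)
    (A : Set (Fin N → ℝ)) (hA : A = Set.univ.pi fun i => Set.Icc (lo i) (hi i))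
    (u : Fin N → (Fin N → ℝ) → ℝ)
    (φ : (Fin N → ℝ) → ℝ) (α : ℝ) (hα : 0 < α)
    (hφ : ∀ i : Fin N, ∀ a ∈ A, ∀ ai' ∈ Set.Icc (lo i) (hi i),
      |(u i a - u i (Function.update a i ai')) - (φ a - φ (Function.update a i ai'))| ≤ α)
    (φmax : ℝ) (hφmax : IsGreatest {x : ℝ | ∃ a ∈ A, x = |φ a|} φmax)
    (ε : ℝ) (hε : 0 < ε)
    (kbar : ℕ) (hkbar : kbar = ⌈2 * φmax / ε⌉₊)
    (a : ℕ → Fin N → ℝ) (ha : ∀ k, a k ∈ A)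
    (hstep : ∀ k : ℕ,
      ((∃ i : Fin N, ∃ c ∈ Set.Icc (lo i) (hi i),
          u i (a k) + α + ε < u i (Function.update (a k) i c)) →
        ∃ i : Fin N, ∃ b ∈ Set.Icc (lo i) (hi i),
          (∀ c ∈ Set.Icc (lo i) (hi i),
            u i (Function.update (a k) i c) ≤ u i (Function.update (a k) i b)) ∧
          u i (a k) + α + ε < u i (Function.update (a k) i b) ∧
          a (k + 1) = Function.update (a k) i b) ∧
      ((¬ ∃ i : Fin N, ∃ c ∈ Set.Icc (lo i) (hi i),
          u i (a k) + α + ε < u i (Function.update (a k) i c)) →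
        a (k + 1) = a k)) :
    (∀ k, kbar ≤ k → a k = a kbar) ∧
    (∀ i : Fin N, ∀ c ∈ Set.Icc (lo i) (hi i),
      u i (a kbar) ≥ u i (Function.update (a kbar) i c) - (α + ε)) := by
  classical
  set Q : (Fin N → ℝ) → Prop := fun x => ∃ i : Fin N, ∃ c ∈ Set.Icc (lo i) (hi i),
      u i x + α + ε < u i (Function.update x i c) with hQ
  -- φ bounds
  have hbound : ∀ k, |φ (a k)| ≤ φmax := fun k => hφmax.2 ⟨a k, ha k, rfl⟩
  have hφmax0 : 0 ≤ φmax := by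
    obtain ⟨a0, _, h0⟩ := hφmax.1
    rw [h0]; positivity
  -- improving step increases φ by more than ε
  have hinc : ∀ k, Q (a k) → φ (a k) + ε < φ (a (k + 1)) := by
    intro k hk
    obtain ⟨i, b, hb, _, himp, heq⟩ := (hstep k).1 hk
    have h := abs_le.1 (hφ i (a k) (ha k) b hb)
    rw [heq]
    linarith [h.1, h.2]
  -- once no improvement, constant forever
  have hconst : ∀ m, ¬ Q (a m) → ∀ k, m ≤ k → a k = a m := by
    intro m hm k hk
    induction k, hk using Nat.le_induction with
    | base => rfl
    | succ n hn ih =>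
      have : a (n + 1) = a n := (hstep n).2 (by rw [ih]; exact hm)
      rw [this, ih]
  -- accumulated increase
  have hacc : ∀ m, (∀ j < m, Q (a j)) → φ (a 0) + m * ε ≤ φ (a m) := by
    intro m
    induction m with
    | zero => intro _; simp
    | succ n ih =>
      intro h
      have h1 := ih fun j hj => h j (Nat.lt_succ_of_lt hj)
      have h2 := hinc n (h n (Nat.lt_succ_self n))
      push_cast
      linarith
  -- there is some step with no improvement
  have hex : ∃ m, ¬ Q (a m) := by
    by_contra h
    push_neg at h
    have h1 := hacc (kbar + 1) fun j _ => h j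
    have h2 : (2 * φmax / ε) ≤ (kbar : ℝ) := by
      rw [hkbar]; exact Nat.le_ceil _
    have h3 : 2 * φmax ≤ (kbar : ℝ) * ε := by
      rw [div_le_iff₀ hε] at h2; linarith
    have b0 := abs_le.1 (hbound 0)
    have bk := abs_le.1 (hbound (kbar + 1))
    push_cast at h1
    linarith [b0.1, bk.2]
  set m := Nat.find hex with hm
  have hmQ : ¬ Q (a m) := Nat.find_spec hex
  have hmin : ∀ j < m, Q (a j) := fun j hj => not_not.1 (Nat.find_min hex hj)
  have hmle : m ≤ kbar := by
    by_contra hc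
    push_neg at hc
    have h1 := hacc m hmin
    have b0 := abs_le.1 (hbound 0)
    have bm := abs_le.1 (hbound m)
    have h2 : (m : ℝ) * ε ≤ 2 * φmax := by linarith [b0.1, bm.2]
    have h3 : (m : ℝ) ≤ 2 * φmax / ε := by rw [le_div_iff₀ hε]; linarith
    have h4 : (2 * φmax / ε) ≤ ((kbar : ℕ) : ℝ) := by
      rw [hkbar]; exact Nat.le_ceil _
    have : (m : ℝ) ≤ (kbar : ℝ) := le_trans h3 h4
    have : m ≤ kbar := by exact_mod_cast this
    omega
  have hkm : a kbar = a m := hconst m hmQ kbar hmle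
  constructor
  · intro k hk
    rw [hkm, hconst m hmQ k (le_trans hmle hk)]
  · intro i c hc
    rw [hkm]
    by_contra hcon
    push_neg at hcon
    exact hmQ ⟨i, c, hc, by linarith⟩
end

section
/- In an LQ network game whose action sets are compact intervals 𝒜_i = [a̲_i, ā_i] ⊆ ℝ, the function φ(a) = −(1/2) Σ_{i=1}^N a_i² + Σ_{i=1}^N β_i a_i + (γ/2) Σ_{i=1}^N (Σ_{j=1}^N G_ij a_j) a_i is an α-potential function of the game with α = (ā · a_δ · |γ| / 2) · ‖G − Gᵀ‖∞, where ā := sup{|a_i| : a_i ∈ 𝒜_i, i ∈ [N]} and a_δ := sup{|a_i − a_i'| : a_i, a_i' ∈ 𝒜_i, i ∈ [N]}. -/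
open Function

/-- In an LQ network game with compact interval action sets, the function
`φ(a) = −(1/2) Σ_i a_i² + Σ_i β_i a_i + (γ/2) Σ_i (Σ_j G_ij a_j) a_i` is an `α`-potential
function of the game with `α = (ā · a_δ · |γ| / 2) · ‖G − Gᵀ‖∞`. -/
theorem lq_alpha_potential
    {N : ℕ} (hN : 0 < N)
    (G : Matrix (Fin N) (Fin N) ℝ) (hdiag : ∀ i, G i i = 0)
    (β : Fin N → ℝ) (γ : ℝ)
    (lo hi : Fin N → ℝ) (hlohi : ∀ i, lo i ≤ hi i)
    (A : Set (Fin N → ℝ)) (hA : A = Set.univ.pi fun i => Set.Icc (lo i) (hi i))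
    (u : Fin N → (Fin N → ℝ) → ℝ)
    (hu : ∀ i a, u i a = -(1/2) * a i ^ 2 + β i * a i + γ * (∑ j, G i j * a j) * a i)
    (abar aδ : ℝ)
    (habar : abar = sSup {x : ℝ | ∃ i : Fin N, ∃ y ∈ Set.Icc (lo i) (hi i), x = |y|})
    (haδ : aδ = sSup {d : ℝ | ∃ i : Fin N, ∃ x ∈ Set.Icc (lo i) (hi i),
      ∃ y ∈ Set.Icc (lo i) (hi i), d = |x - y|})
    (φ : (Fin N → ℝ) → ℝ)
    (hφ : ∀ a, φ a = -(1/2) * ∑ i, a i ^ 2 + ∑ i, β i * a i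
      + γ / 2 * ∑ i, (∑ j, G i j * a j) * a i)
    (α : ℝ)
    (hα : α = abar * aδ * |γ| / 2 * (⨆ i, ∑ j, |G i j - G j i|)) :
    ∀ i : Fin N, ∀ a ∈ A, ∀ ai' ∈ Set.Icc (lo i) (hi i),
      |(u i a - u i (Function.update a i ai')) - (φ a - φ (Function.update a i ai'))| ≤ α := by
  intro i a ha ai' hai'
  set a' : Fin N → ℝ := Function.update a i ai' with ha'def
  have ha'i : a' i = ai' := Function.update_self _ _ _
  have ha'ne : ∀ j, j ≠ i → a' j = a j := fun j hj => Function.update_of_ne hj _ _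
  set δ : ℝ := a i - ai' with hδ
  have hS : ∀ k, ∑ j, G k j * a' j = (∑ j, G k j * a j) - G k i * δ := by
    intro k
    have h1 : ∑ j, (G k j * a j - G k j * a' j) = G k i * δ := by
      rw [Finset.sum_eq_single i]
      · rw [ha'i]; ring
      · intro j _ hj; rw [ha'ne j hj]; ring
      · intro h; exact absurd (Finset.mem_univ i) h
    rw [Finset.sum_sub_distrib] at h1
    linarith
  have hsq : ∑ k, (a k)^2 - ∑ k, (a' k)^2 = (a i)^2 - ai'^2 := by
    rw [← Finset.sum_sub_distrib, Finset.sum_eq_single i]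
    · rw [ha'i]
    · intro j _ hj; rw [ha'ne j hj]; ring
    · intro h; exact absurd (Finset.mem_univ i) h
  have hlin : ∑ k, β k * a k - ∑ k, β k * a' k = β i * δ := by
    rw [← Finset.sum_sub_distrib, Finset.sum_eq_single i]
    · rw [ha'i]; ring
    · intro j _ hj; rw [ha'ne j hj]; ring
    · intro h; exact absurd (Finset.mem_univ i) h
  have hQ : (∑ k, (∑ j, G k j * a j) * a k) - ∑ k, (∑ j, G k j * a' j) * a' k
      = δ * ((∑ j, G i j * a j) + ∑ j, G j i * a j) := by
    have key : ∀ k, (∑ j, G k j * a j) * a k - (∑ j, G k j * a' j) * a' k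
        = G k i * δ * a k + (if k = i then (∑ j, G i j * a j) * δ else 0) := by
      intro k
      by_cases hk : k = i
      · subst hk
        rw [hS, ha'i, hdiag, if_pos rfl]
        ring
      · rw [hS, ha'ne k hk, if_neg hk]
        ring
    rw [← Finset.sum_sub_distrib, Finset.sum_congr rfl (fun k _ => key k),
      Finset.sum_add_distrib, Finset.sum_ite_eq' Finset.univ i
        (fun _ => (∑ j, G i j * a j) * δ), if_pos (Finset.mem_univ i)]
    have h3 : ∑ x, G x i * δ * a x = δ * ∑ j, G j i * a j := by
      rw [Finset.mul_sum]
      exact Finset.sum_congr rfl fun j _ => by ring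
    rw [h3]; ring
  -- key identity
  have hkey : (u i a - u i a') - (φ a - φ a')
      = γ / 2 * δ * ∑ j, (G i j - G j i) * a j := by
    have hSi : ∑ j, G i j * a' j = ∑ j, G i j * a j := by
      rw [hS, hdiag]; ring
    have hdist : ∑ j, (G i j - G j i) * a j
        = (∑ j, G i j * a j) - ∑ j, G j i * a j := by
      rw [← Finset.sum_sub_distrib]
      exact Finset.sum_congr rfl fun j _ => by ring
    rw [hu, hu, hφ, hφ, hSi, ha'i, hdist]
    simp only [hδ] at hsq hlin hQ ⊢
    linear_combination (1/2 : ℝ) * hsq - hlin - γ/2 * hQ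
  -- bounds
  have hmemA : ∀ j, a j ∈ Set.Icc (lo j) (hi j) := by
    rw [hA] at ha; exact fun j => ha j (Set.mem_univ j)
  have hMne : (Finset.univ : Finset (Fin N)).Nonempty :=
    Finset.univ_nonempty_iff.mpr (Fin.pos_iff_nonempty.mp hN)
  have habar_le : ∀ j, |a j| ≤ abar := by
    intro j
    rw [habar]
    apply le_csSup
    · refine ⟨Finset.univ.sup' hMne fun k => max |lo k| |hi k|, ?_⟩
      rintro x ⟨k, y, hy, rfl⟩
      refine le_trans ?_ (Finset.le_sup' _ (Finset.mem_univ k))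
      exact abs_le_max_abs_abs hy.1 hy.2
    · exact ⟨j, a j, hmemA j, rfl⟩
  have haδ_le : |δ| ≤ aδ := by
    rw [haδ]
    apply le_csSup
    · refine ⟨Finset.univ.sup' hMne fun k => hi k - lo k, ?_⟩
      rintro x ⟨k, y, hy, z, hz, rfl⟩
      refine le_trans ?_ (Finset.le_sup' _ (Finset.mem_univ k))
      rw [abs_sub_le_iff]
      constructor <;> linarith [hy.1, hy.2, hz.1, hz.2]
    · exact ⟨i, a i, hmemA i, ai', hai', rfl⟩
  have habar0 : 0 ≤ abar := le_trans (abs_nonneg _) (habar_le i)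
  have haδ0 : 0 ≤ aδ := le_trans (abs_nonneg _) haδ_le
  have hrow : ∑ j, |G i j - G j i| ≤ ⨆ k, ∑ j, |G k j - G j k| :=
    le_ciSup (f := fun k => ∑ j, |G k j - G j k|)
      (Set.Finite.bddAbove (Set.finite_range _)) i
  have hrow0 : (0:ℝ) ≤ ∑ j, |G i j - G j i| :=
    Finset.sum_nonneg fun j _ => abs_nonneg _
  rw [hkey, hα]
  have h1 : |γ / 2 * δ * ∑ j, (G i j - G j i) * a j|
      ≤ |γ| / 2 * |δ| * ∑ j, |G i j - G j i| * |a j| := by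
    rw [abs_mul, abs_mul, abs_div]
    gcongr
    · simp
    · calc |∑ j, (G i j - G j i) * a j| ≤ ∑ j, |(G i j - G j i) * a j| :=
          Finset.abs_sum_le_sum_abs _ _
        _ = ∑ j, |G i j - G j i| * |a j| := by
          exact Finset.sum_congr rfl fun j _ => abs_mul _ _
  have h2 : ∑ j, |G i j - G j i| * |a j| ≤ abar * ∑ j, |G i j - G j i| := by
    rw [Finset.mul_sum]
    refine Finset.sum_le_sum fun j _ => ?_
    rw [mul_comm abar]
    exact mul_le_mul_of_nonneg_left (habar_le j) (abs_nonneg _)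
  calc |γ / 2 * δ * ∑ j, (G i j - G j i) * a j|
      ≤ |γ| / 2 * |δ| * (abar * ∑ j, |G i j - G j i|) := by
        refine le_trans h1 ?_
        exact mul_le_mul_of_nonneg_left h2 (by positivity)
    _ ≤ |γ| / 2 * aδ * (abar * (⨆ k, ∑ j, |G k j - G j k|)) := by
        have h0 : (0:ℝ) ≤ ⨆ k, ∑ j, |G k j - G j k| := le_trans hrow0 hrow
        gcongr
    _ = abar * aδ * |γ| / 2 * (⨆ k, ∑ j, |G k j - G j k|) := by ring
end

section
/- (Erdős–Rényi network.) Fix r > 2 and a sequence p : ℕ → [0,1] such that for every N, either p(N) ≤ 1/Nʳ or p(N) ≥ 1 − 1/Nʳ. For each N, let G ∈ ℝ^{N×N} be a random matrix with G_ii = 0 for all i and with the off-diagonal entries {G_ij : i ≠ j} being independent Bernoulli random variables taking value 1 with probability p(N) and value 0 otherwise. Then for every δ > 0 and t > 0 there exists N₀ such that for all N ≥ N₀, with probability at least 1 − δ, ‖G − Gᵀ‖∞ ≤ 2/N^{r−1} + t. -/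
open MeasureTheory ProbabilityTheory Filter Topology

/-! Each off-diagonal entry of `G` equals a common value `v` (`0` if `p(N) ≤ N^{-r}`, `1` if
`p(N) ≥ 1 - N^{-r}`) outside an event of probability at most `N^{-r}`. Off the union of these `N²`
events `G` is symmetric, so `‖G - Gᵀ‖∞ = 0`, and the union has probability at most
`N² · N^{-r} → 0` since `r > 2`. -/

lemma iSup_sum_abs_sub_transpose_eq_zero_of_offDiag_eq {ι : Type*} [Fintype ι]
    {M : Matrix ι ι ℝ} {v : ℝ} (hM : ∀ i j, i ≠ j → M i j = v) :
    (⨆ i, ∑ j, |M i j - M j i|) = 0 := by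
  have hsymm : ∀ i j, M i j = M j i := fun i j => by
    rcases eq_or_ne i j with rfl | hij
    · rfl
    · rw [hM i j hij, hM j i hij.symm]
  simp only [hsymm, sub_self, abs_zero, Finset.sum_const_zero, Real.iSup_const_zero]

section RandomMatrix

variable {Ω ι : Type*} [MeasurableSpace Ω] [Fintype ι] {μ : Measure Ω}

lemma measure_exists_offDiag_ne_le (M : Ω → Matrix ι ι ℝ) (v : ℝ) {ε : ENNReal}
    (hε : ∀ i j, i ≠ j → μ {ω | M ω i j ≠ v} ≤ ε) :
    μ {ω | ∃ i j, i ≠ j ∧ M ω i j ≠ v} ≤ Fintype.card ι ^ 2 * ε := by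
  have hcover : {ω | ∃ i j, i ≠ j ∧ M ω i j ≠ v} =
      ⋃ q : ι × ι, {ω | q.1 ≠ q.2 ∧ M ω q.1 q.2 ≠ v} := by
    ext ω; simp
  calc μ {ω | ∃ i j, i ≠ j ∧ M ω i j ≠ v}
      ≤ ∑ q : ι × ι, μ {ω | q.1 ≠ q.2 ∧ M ω q.1 q.2 ≠ v} :=
        hcover ▸ measure_iUnion_fintype_le μ _
    _ ≤ ∑ _q : ι × ι, ε := by
        refine Finset.sum_le_sum fun q _ => ?_
        rcases eq_or_ne q.1 q.2 with hq | hq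
        · simp [hq]
        · exact (measure_mono fun ω hω => hω.2).trans (hε q.1 q.2 hq)
    _ = Fintype.card ι ^ 2 * ε := by simp [sq]

lemma one_sub_card_sq_mul_le_measure_iSup_sum_abs_sub_transpose_le [IsProbabilityMeasure μ]
    (M : Ω → Matrix ι ι ℝ) (hmeas : ∀ i j, Measurable fun ω => M ω i j) (v : ℝ) {ε : ENNReal}
    (hε : ∀ i j, i ≠ j → μ {ω | M ω i j ≠ v} ≤ ε) {c : ℝ} (hc : 0 ≤ c) :
    1 - Fintype.card ι ^ 2 * ε ≤ μ {ω | (⨆ i, ∑ j, |M ω i j - M ω j i|) ≤ c} := by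
  set bad := {ω | ∃ i j, i ≠ j ∧ M ω i j ≠ v}
  have hbad : MeasurableSet bad := by
    have hbad_eq : bad = ⋃ i, ⋃ j, {ω | i ≠ j} ∩ (fun ω => M ω i j) ⁻¹' {v}ᶜ := by
      ext; simp [bad]
    rw [hbad_eq]
    exact .iUnion fun i => .iUnion fun j =>
      (MeasurableSet.const _).inter ((hmeas i j) (measurableSet_singleton v).compl)
  have hgood : badᶜ ⊆ {ω | (⨆ i, ∑ j, |M ω i j - M ω j i|) ≤ c} := fun ω hω => by
    simp only [bad, Set.mem_compl_iff, Set.mem_ofPred_eq, not_exists, not_and, not_not] at hω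
    simp only [Set.mem_ofPred_eq, iSup_sum_abs_sub_transpose_eq_zero_of_offDiag_eq hω, hc]
  calc 1 - Fintype.card ι ^ 2 * ε ≤ 1 - μ bad :=
        tsub_le_tsub_left (measure_exists_offDiag_ne_le M v hε) 1
    _ = μ badᶜ := (prob_compl_eq_one_sub hbad).symm
    _ ≤ _ := measure_mono hgood

end RandomMatrix

section Bernoulli

variable {Ω : Type*} [MeasurableSpace Ω] {μ : Measure Ω} {X : Ω → ℝ} {q ε : ℝ}

lemma measure_ne_zero_le_of_bernoulli (hX : ∀ ω, X ω = 0 ∨ X ω = 1)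
    (hq : μ {ω | X ω = 1} = ENNReal.ofReal q) (hqε : q ≤ ε) :
    μ {ω | X ω ≠ 0} ≤ ENNReal.ofReal ε := by
  have hset : {ω | X ω ≠ 0} = {ω | X ω = 1} := by
    ext ω; rcases hX ω with h | h <;> simp [h]
  rw [hset, hq]
  exact ENNReal.ofReal_le_ofReal hqε

lemma measure_ne_one_le_of_bernoulli [IsProbabilityMeasure μ] (hX : Measurable X)
    (hq : μ {ω | X ω = 1} = ENNReal.ofReal q) (hqε : 1 - ε ≤ q) :
    μ {ω | X ω ≠ 1} ≤ ENNReal.ofReal ε := by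
  have h1 : MeasurableSet {ω | X ω = 1} := hX (measurableSet_singleton 1)
  rw [← Set.compl_ofPred, prob_compl_eq_one_sub h1, hq, tsub_le_iff_right]
  calc (1 : ENNReal) = ENNReal.ofReal 1 := ENNReal.ofReal_one.symm
    _ ≤ ENNReal.ofReal (ε + q) := ENNReal.ofReal_le_ofReal (by linarith)
    _ ≤ ENNReal.ofReal ε + ENNReal.ofReal q := ENNReal.ofReal_add_le

end Bernoulli

lemma tendsto_natCast_sq_div_rpow_atTop {r : ℝ} (hr : 2 < r) :
    Tendsto (fun N : ℕ => (N : ℝ) ^ 2 / (N : ℝ) ^ r) atTop (𝓝 0) := by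
  have hpow : Tendsto (fun N : ℕ => (N : ℝ) ^ (-(r - 2))) atTop (𝓝 0) :=
    (tendsto_rpow_neg_atTop (by linarith)).comp tendsto_natCast_atTop_atTop
  refine hpow.congr' ((eventually_gt_atTop 0).mono fun N hN => ?_)
  have hN : (0 : ℝ) < N := by exact_mod_cast hN
  rw [neg_sub, Real.rpow_sub hN, Real.rpow_two]

lemma ENNReal.ofReal_one_sub_le_one_sub_ofReal {a δ : ℝ} (ha : 0 ≤ a) (haδ : a ≤ δ) :
    ENNReal.ofReal (1 - δ) ≤ 1 - ENNReal.ofReal a := by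
  rw [← ENNReal.ofReal_one, ← ENNReal.ofReal_sub _ ha]
  exact ENNReal.ofReal_le_ofReal (by linarith)

theorem erdos_renyi_asymmetry_bound_general
    {Ω : Type*} [MeasurableSpace Ω] (μ : Measure Ω) [IsProbabilityMeasure μ]
    (r : ℝ) (hr : 2 < r)
    (p : ℕ → ℝ)
    (hp : ∀ N : ℕ, p N ≤ 1 / (N : ℝ) ^ r ∨ 1 - 1 / (N : ℝ) ^ r ≤ p N)
    (G : (N : ℕ) → Ω → Matrix (Fin N) (Fin N) ℝ)
    (hmeas : ∀ N (i j : Fin N), Measurable fun ω => G N ω i j)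
    (hval : ∀ N (ω : Ω) (i j : Fin N), i ≠ j → G N ω i j = 0 ∨ G N ω i j = 1)
    (hbern : ∀ N (i j : Fin N), i ≠ j →
      μ {ω | G N ω i j = 1} = ENNReal.ofReal (p N)) :
    ∀ δ : ℝ, 0 < δ → ∀ t : ℝ, 0 < t → ∃ N₀ : ℕ, ∀ N, N₀ ≤ N →
      ENNReal.ofReal (1 - δ) ≤
        μ {ω | (⨆ i : Fin N, ∑ j, |G N ω i j - G N ω j i|) ≤ 2 / (N : ℝ) ^ (r - 1) + t} := by
  intro δ hδ t ht
  obtain ⟨N₀, hN₀⟩ := eventually_atTop.mp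
    ((tendsto_natCast_sq_div_rpow_atTop hr).eventually (eventually_le_nhds hδ))
  refine ⟨N₀, fun N hN => ?_⟩
  obtain ⟨v, hv⟩ : ∃ v : ℝ, ∀ i j : Fin N, i ≠ j →
      μ {ω | G N ω i j ≠ v} ≤ ENNReal.ofReal (1 / (N : ℝ) ^ r) := by
    rcases hp N with hsmall | hlarge
    · exact ⟨0, fun i j hij => measure_ne_zero_le_of_bernoulli
        (fun ω => hval N ω i j hij) (hbern N i j hij) hsmall⟩
    · exact ⟨1, fun i j hij => measure_ne_one_le_of_bernoulli
        (hmeas N i j) (hbern N i j hij) hlarge⟩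
  have hcard : Fintype.card (Fin N) ^ 2 * ENNReal.ofReal (1 / (N : ℝ) ^ r) =
      ENNReal.ofReal ((N : ℝ) ^ 2 / (N : ℝ) ^ r) := by
    rw [Fintype.card_fin, ← ENNReal.ofReal_natCast, ← ENNReal.ofReal_pow (Nat.cast_nonneg N),
      ← ENNReal.ofReal_mul (by positivity), mul_one_div]
  calc ENNReal.ofReal (1 - δ)
      ≤ 1 - ENNReal.ofReal ((N : ℝ) ^ 2 / (N : ℝ) ^ r) :=
        ENNReal.ofReal_one_sub_le_one_sub_ofReal (by positivity) (hN₀ N hN)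
    _ ≤ _ := hcard ▸ one_sub_card_sq_mul_le_measure_iSup_sum_abs_sub_transpose_le
        (G N) (hmeas N) v hv (by positivity)

/-- **Erdős–Rényi network.** Fix `r > 2` and edge probabilities `p(N)` with `p(N) ≤ 1/Nʳ` or
`p(N) ≥ 1 − 1/Nʳ` for all `N`. For each `N`, let `G` be a random `N×N` matrix with zero diagonal
and i.i.d.-independent Bernoulli(`p(N)`) off-diagonal entries. Then for every `δ > 0` and `t > 0`
there exists `N₀` such that for all `N ≥ N₀`, with probability at least `1 − δ`,
`‖G − Gᵀ‖∞ ≤ 2/N^{r−1} + t`. -/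
theorem erdos_renyi_asymmetry_bound
    {Ω : Type*} [MeasurableSpace Ω] (μ : Measure Ω) [IsProbabilityMeasure μ]
    (r : ℝ) (hr : 2 < r)
    (p : ℕ → ℝ) (hp01 : ∀ N, p N ∈ Set.Icc (0 : ℝ) 1)
    (hp : ∀ N : ℕ, p N ≤ 1 / (N : ℝ) ^ r ∨ 1 - 1 / (N : ℝ) ^ r ≤ p N)
    (G : (N : ℕ) → Ω → Matrix (Fin N) (Fin N) ℝ)
    (hmeas : ∀ N (i j : Fin N), Measurable fun ω => G N ω i j)
    (hdiag : ∀ N (ω : Ω) (i : Fin N), G N ω i i = 0)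
    (hval : ∀ N (ω : Ω) (i j : Fin N), i ≠ j → G N ω i j = 0 ∨ G N ω i j = 1)
    (hbern : ∀ N (i j : Fin N), i ≠ j →
      μ {ω | G N ω i j = 1} = ENNReal.ofReal (p N))
    (hindep : ∀ N : ℕ, iIndepFun
      (fun (q : {q : Fin N × Fin N // q.1 ≠ q.2}) ω => G N ω q.1.1 q.1.2) μ) :
    ∀ δ : ℝ, 0 < δ → ∀ t : ℝ, 0 < t → ∃ N₀ : ℕ, ∀ N, N₀ ≤ N →
      ENNReal.ofReal (1 - δ) ≤
        μ {ω | (⨆ i : Fin N, ∑ j, |G N ω i j - G N ω j i|) ≤ 2 / (N : ℝ) ^ (r - 1) + t} :=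
  erdos_renyi_asymmetry_bound_general μ r hr p hp G hmeas hval hbern
end

section
/- (Unique social optimum.) Consider an LQ network game satisfying the contraction assumption. Then the social welfare function SW has a unique maximizer over 𝒜, given by a^opt = (I − γ(G + Gᵀ))^{-1} β, and this point lies in 𝒜. -/
open Matrix

/-- **Unique social optimum.** In an LQ network game satisfying the contraction assumption, the
social welfare `SW(a) = Σ_i u_i(a)` has a unique maximizer over `𝒜`, given by
`a^opt = (I − γ(G + Gᵀ))⁻¹ β`, and this point lies in `𝒜`. -/
theorem unique_social_optimum
    {N : ℕ} (hN : 0 < N)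
    (G : Matrix (Fin N) (Fin N) ℝ)
    (hdiag : ∀ i, G i i = 0)
    (hGsmall : ∀ i j, |G i j| ≤ 1 / (N : ℝ))
    (γ : ℝ) (hγ : |γ| < 1 / 2)
    (β : Fin N → ℝ)
    (lo hi : Fin N → ℝ) (hlohi : ∀ i, lo i ≤ hi i)
    (A : Set (Fin N → ℝ)) (hA : A = Set.univ.pi fun i => Set.Icc (lo i) (hi i))
    (atil : ℝ) (hatil : 0 ≤ atil)
    (hsub : ∀ i, Set.Icc (-atil) atil ⊆ Set.Icc (lo i) (hi i))
    (hβ : ∀ i, |β i| ≤ (1 - 2 * |γ|) * atil)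
    (u : Fin N → (Fin N → ℝ) → ℝ)
    (hu : ∀ i a, u i a = -(1/2) * a i ^ 2 + β i * a i + γ * (∑ j, G i j * a j) * a i)
    (SW : (Fin N → ℝ) → ℝ) (hSW : ∀ a, SW a = ∑ i, u i a)
    (aopt : Fin N → ℝ) (haopt : aopt = (1 - γ • (G + Gᵀ))⁻¹ *ᵥ β) :
    aopt ∈ A ∧ ∀ a ∈ A, a ≠ aopt → SW a < SW aopt := by
  have hNR : (0:ℝ) < (N:ℝ) := by exact_mod_cast hN
  set M : Matrix (Fin N) (Fin N) ℝ := 1 - γ • (G + Gᵀ) with hM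
  -- quadratic form identity
  have hquad : ∀ v : Fin N → ℝ,
      v ⬝ᵥ (M *ᵥ v) = (∑ i, v i ^ 2) - 2 * γ * ∑ i, v i * ∑ j, G i j * v j := by
    intro v
    have h1 : M *ᵥ v = v - γ • (G *ᵥ v + Gᵀ *ᵥ v) := by
      simp [hM, Matrix.sub_mulVec, Matrix.add_mulVec, Matrix.smul_mulVec]
    have h2 : v ⬝ᵥ (Gᵀ *ᵥ v) = v ⬝ᵥ (G *ᵥ v) := by
      rw [Matrix.dotProduct_mulVec, Matrix.vecMul_transpose, dotProduct_comm]
    rw [h1, dotProduct_sub, dotProduct_smul, dotProduct_add, h2]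
    have h3 : v ⬝ᵥ v = ∑ i, v i ^ 2 := by
      simp [dotProduct, sq]
    have h4 : v ⬝ᵥ (G *ᵥ v) = ∑ i, v i * ∑ j, G i j * v j := by
      simp [dotProduct, Matrix.mulVec]
    rw [h3, h4, smul_eq_mul]
    ring
  -- positive definiteness
  have hpos : ∀ v : Fin N → ℝ, v ≠ 0 → 0 < v ⬝ᵥ (M *ᵥ v) := by
    intro v hv
    rw [hquad v]
    set Q : ℝ := ∑ i, v i ^ 2 with hQ
    set S : ℝ := ∑ i, |v i| with hSdef
    set X : ℝ := ∑ i, v i * ∑ j, G i j * v j with hX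
    have hQpos : 0 < Q := by
      obtain ⟨i, hi⟩ := Function.ne_iff.mp hv
      refine Finset.sum_pos' (fun i _ => sq_nonneg _) ⟨i, Finset.mem_univ _, sq_pos_of_ne_zero hi⟩
    have hSnn : 0 ≤ S := Finset.sum_nonneg fun i _ => abs_nonneg _
    have hS2 : S ^ 2 ≤ (N:ℝ) * Q := by
      have := sq_sum_le_card_mul_sum_sq (s := (Finset.univ : Finset (Fin N)))
        (f := fun i => |v i|)
      simpa [sq_abs, Finset.card_univ] using this
    have hinner : ∀ i, |∑ j, G i j * v j| ≤ (1 / (N:ℝ)) * S := by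
      intro i
      calc |∑ j, G i j * v j| ≤ ∑ j, |G i j * v j| := Finset.abs_sum_le_sum_abs _ _
        _ ≤ ∑ j, (1 / (N:ℝ)) * |v j| := by
            refine Finset.sum_le_sum fun j _ => ?_
            rw [abs_mul]
            exact mul_le_mul_of_nonneg_right (hGsmall i j) (abs_nonneg _)
        _ = (1 / (N:ℝ)) * S := by rw [hSdef, Finset.mul_sum]
    have hXb : |X| ≤ Q := by
      have h1 : |X| ≤ (1 / (N:ℝ)) * S ^ 2 := by
        calc |X| ≤ ∑ i, |v i * ∑ j, G i j * v j| := Finset.abs_sum_le_sum_abs _ _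
          _ = ∑ i, |v i| * |∑ j, G i j * v j| := by simp [abs_mul]
          _ ≤ ∑ i, |v i| * ((1 / (N:ℝ)) * S) := by
              refine Finset.sum_le_sum fun i _ => ?_
              exact mul_le_mul_of_nonneg_left (hinner i) (abs_nonneg _)
          _ = S * ((1 / (N:ℝ)) * S) := by rw [hSdef, ← Finset.sum_mul]
          _ = (1 / (N:ℝ)) * S ^ 2 := by ring
      calc |X| ≤ (1 / (N:ℝ)) * S ^ 2 := h1
        _ ≤ (1 / (N:ℝ)) * ((N:ℝ) * Q) := by
            exact mul_le_mul_of_nonneg_left hS2 (by positivity)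
        _ = Q := by field_simp
    have h2 : 2 * γ * X ≤ 2 * |γ| * |X| := by
      have : 2 * γ * X ≤ |2 * γ * X| := le_abs_self _
      calc 2 * γ * X ≤ |2 * γ * X| := le_abs_self _
        _ = 2 * |γ| * |X| := by rw [abs_mul, abs_mul]; simp
    have h3 : 2 * |γ| * |X| ≤ 2 * |γ| * Q :=
      mul_le_mul_of_nonneg_left hXb (by positivity)
    nlinarith [abs_nonneg γ]
  -- symmetry
  have hMsymm : Mᵀ = M := by
    simp [hM, transpose_sub, transpose_smul, transpose_add, add_comm]
  have hsym : ∀ v w : Fin N → ℝ, v ⬝ᵥ (M *ᵥ w) = w ⬝ᵥ (M *ᵥ v) := by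
    intro v w
    conv_lhs => rw [Matrix.dotProduct_mulVec, ← hMsymm, Matrix.vecMul_transpose,
      dotProduct_comm]
  -- invertibility
  have hdet : M.det ≠ 0 := by
    intro h
    obtain ⟨v, hv, hv0⟩ := (Matrix.exists_mulVec_eq_zero_iff).2 h
    have := hpos v hv
    rw [hv0] at this
    simp at this
  have hMa : M *ᵥ aopt = β := by
    rw [haopt, Matrix.mulVec_mulVec, Matrix.mul_nonsing_inv _ (isUnit_iff_ne_zero.mpr hdet),
      Matrix.one_mulVec]
  -- SW formula
  have hSW' : ∀ a, SW a = β ⬝ᵥ a - (1/2) * (a ⬝ᵥ (M *ᵥ a)) := by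
    intro a
    rw [hSW, hquad a]
    have h1 : ∑ i, u i a
        = ∑ i, ((β i * a i) + (-(1/2) * a i ^ 2 + γ * (a i * ∑ j, G i j * a j))) := by
      refine Finset.sum_congr rfl fun i _ => by rw [hu]; ring
    rw [h1, Finset.sum_add_distrib, Finset.sum_add_distrib, ← Finset.mul_sum, ← Finset.mul_sum]
    have h2 : β ⬝ᵥ a = ∑ i, β i * a i := rfl
    rw [h2]
    ring
  -- comparison identity
  have hcomp : ∀ a, SW aopt - SW a = (1/2) * ((a - aopt) ⬝ᵥ (M *ᵥ (a - aopt))) := by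
    intro a
    rw [hSW' a, hSW' aopt]
    rw [Matrix.mulVec_sub, dotProduct_sub, sub_dotProduct, sub_dotProduct, hMa]
    have h3 : aopt ⬝ᵥ (M *ᵥ a) = a ⬝ᵥ β := by rw [hsym, hMa]
    rw [h3, dotProduct_comm a β, dotProduct_comm aopt β]
    ring
  -- bound on aopt
  have habound : ∀ i, |aopt i| ≤ atil := by
    have hcoord : ∀ i, aopt i = β i + γ * ((G *ᵥ aopt) i + (Gᵀ *ᵥ aopt) i) := by
      intro i
      have := congrFun hMa i
      have h1 : M *ᵥ aopt = aopt - γ • (G *ᵥ aopt + Gᵀ *ᵥ aopt) := by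
        simp [hM, Matrix.sub_mulVec, Matrix.add_mulVec, Matrix.smul_mulVec]
      rw [h1] at this
      simp only [Pi.sub_apply, Pi.smul_apply, Pi.add_apply, smul_eq_mul] at this
      linarith
    obtain ⟨i₀, -, hmax⟩ := Finset.exists_max_image (Finset.univ : Finset (Fin N))
      (fun i => |aopt i|) ⟨⟨0, hN⟩, Finset.mem_univ _⟩
    have hmax' : ∀ i, |aopt i| ≤ |aopt i₀| := fun i => hmax i (Finset.mem_univ i)
    have hkey : |aopt i₀| ≤ atil := by
      have hGv : ∀ (H : Matrix (Fin N) (Fin N) ℝ), (∀ i j, |H i j| ≤ 1/(N:ℝ)) →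
          |(H *ᵥ aopt) i₀| ≤ |aopt i₀| := by
        intro H hH
        calc |(H *ᵥ aopt) i₀| = |∑ j, H i₀ j * aopt j| := by simp [Matrix.mulVec, dotProduct]
          _ ≤ ∑ j, |H i₀ j * aopt j| := Finset.abs_sum_le_sum_abs _ _
          _ ≤ ∑ j, (1/(N:ℝ)) * |aopt i₀| := by
              refine Finset.sum_le_sum fun j _ => ?_
              rw [abs_mul]
              exact mul_le_mul (hH i₀ j) (hmax' j) (abs_nonneg _) (by positivity)
          _ = |aopt i₀| := by
              rw [Finset.sum_const, Finset.card_univ, Fintype.card_fin, nsmul_eq_mul]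
              field_simp
      have hGT : ∀ i j, |Gᵀ i j| ≤ 1/(N:ℝ) := fun i j => hGsmall j i
      have h1 := hGv G hGsmall
      have h2 := hGv Gᵀ hGT
      have h3 : |aopt i₀| ≤ |β i₀| + |γ| * (2 * |aopt i₀|) := by
        conv_lhs => rw [hcoord i₀]
        calc |β i₀ + γ * ((G *ᵥ aopt) i₀ + (Gᵀ *ᵥ aopt) i₀)|
            ≤ |β i₀| + |γ * ((G *ᵥ aopt) i₀ + (Gᵀ *ᵥ aopt) i₀)| := abs_add_le _ _
          _ = |β i₀| + |γ| * |(G *ᵥ aopt) i₀ + (Gᵀ *ᵥ aopt) i₀| := by rw [abs_mul]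
          _ ≤ |β i₀| + |γ| * (|(G *ᵥ aopt) i₀| + |(Gᵀ *ᵥ aopt) i₀|) := by
              have := abs_add_le ((G *ᵥ aopt) i₀) ((Gᵀ *ᵥ aopt) i₀)
              nlinarith [abs_nonneg γ]
          _ ≤ |β i₀| + |γ| * (2 * |aopt i₀|) := by nlinarith [abs_nonneg γ]
      have h4 := hβ i₀
      nlinarith [abs_nonneg (aopt i₀)]
    intro i
    exact (hmax' i).trans hkey
  constructor
  · rw [hA]
    intro i _
    exact hsub i (abs_le.mp (habound i))
  · intro a _ hne
    have hd : a - aopt ≠ 0 := sub_ne_zero.mpr hne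
    have := hpos _ hd
    have h := hcomp a
    linarith
end

section
/- (Unique maximizer of the α-potential function.) Consider an LQ network game satisfying the contraction assumption, and define φ(a) = −(1/2) Σ_{i=1}^N a_i² + Σ_{i=1}^N β_i a_i + (γ/2) Σ_{i=1}^N (Σ_{j=1}^N G_ij a_j) a_i. Then φ has a unique maximizer over 𝒜, given by a^α = (I − (γ/2)(G + Gᵀ))^{-1} β, and this point lies in 𝒜. -/
/-!
With `M = 1 - (γ/2)(G + Gᵀ)` the potential is `φ a = β ⬝ a - (a ⬝ M a) / 2`. The entry bound
`|G i j| ≤ 1/N` gives `|a ⬝ G a| ≤ a ⬝ a`, so `M` is positive definite for `|γ| < 1` and the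
critical point `M⁻¹ β` is the strict maximizer of `φ` on all of `ℝᴺ`. The same bound makes `G`
and `Gᵀ` nonexpansive in the sup norm, so the fixed-point equation `a = β + (γ/2)(G + Gᵀ) a`
gives `(1 - |γ|) ‖a‖∞ ≤ ‖β‖∞ ≤ (1 - 2|γ|) ã`, and the critical point lies in the box `𝒜`.
-/

open Matrix

namespace Matrix

section EntrywiseBound

variable {ι : Type*} [Fintype ι] {G : Matrix ι ι ℝ}

theorem abs_dotProduct_mulVec_le_of_abs_le (hG : ∀ i j, |G i j| ≤ 1 / Fintype.card ι)
    (x : ι → ℝ) : |x ⬝ᵥ (G *ᵥ x)| ≤ x ⬝ᵥ x := by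
  rcases isEmpty_or_nonempty ι with _ | _
  · simp
  have hn : (0 : ℝ) < Fintype.card ι := by exact_mod_cast Fintype.card_pos
  calc |x ⬝ᵥ (G *ᵥ x)| = |∑ i, ∑ j, x i * (G i j * x j)| := by
        simp only [dotProduct, mulVec, Finset.mul_sum]
    _ ≤ ∑ i, ∑ j, |x i| * (1 / Fintype.card ι * |x j|) := by
        refine (Finset.abs_sum_le_sum_abs _ _).trans (Finset.sum_le_sum fun i _ => ?_)
        refine (Finset.abs_sum_le_sum_abs _ _).trans (Finset.sum_le_sum fun j _ => ?_)
        rw [abs_mul, abs_mul]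
        gcongr
        exact hG i j
    _ = (∑ i, |x i|) ^ 2 / Fintype.card ι := by
        simp only [← Finset.mul_sum, ← Finset.sum_mul]
        ring
    _ ≤ Fintype.card ι * (∑ i, |x i| ^ 2) / Fintype.card ι := by
        gcongr
        simpa using sq_sum_le_card_mul_sum_sq (s := Finset.univ) (f := fun i => |x i|)
    _ = x ⬝ᵥ x := by
        rw [mul_div_cancel_left₀ _ hn.ne']
        simp [dotProduct, sq]

theorem norm_mulVec_le_of_abs_le (hG : ∀ i j, |G i j| ≤ 1 / Fintype.card ι) (x : ι → ℝ) :
    ‖G *ᵥ x‖ ≤ ‖x‖ := by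
  refine (pi_norm_le_iff_of_nonneg (norm_nonneg x)).2 fun i => ?_
  have hn : (0 : ℝ) < Fintype.card ι := by exact_mod_cast Fintype.card_pos_iff.2 ⟨i⟩
  calc ‖(G *ᵥ x) i‖ ≤ ∑ j, ‖G i j‖ * ‖x j‖ := by
        simp only [mulVec, dotProduct]
        exact (norm_sum_le _ _).trans_eq (by simp only [norm_mul])
    _ ≤ ∑ _j : ι, 1 / Fintype.card ι * ‖x‖ := by
        gcongr with j
        · exact hG i j
        · exact norm_le_pi_norm x j
    _ = ‖x‖ := by
        rw [Finset.sum_const, Finset.card_univ, nsmul_eq_mul, ← mul_assoc, mul_one_div_cancel hn.ne',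
          one_mul]

end EntrywiseBound

theorem PosDef.dotProduct_sub_half_dotProduct_mulVec_lt {ι : Type*} [Fintype ι]
    {M : Matrix ι ι ℝ} (hM : M.PosDef) {x₀ b y : ι → ℝ} (hx₀ : M *ᵥ x₀ = b) (hy : y ≠ x₀) :
    b ⬝ᵥ y - y ⬝ᵥ (M *ᵥ y) / 2 < b ⬝ᵥ x₀ - x₀ ⬝ᵥ (M *ᵥ x₀) / 2 := by
  have hsymm : ∀ u v : ι → ℝ, u ⬝ᵥ (M *ᵥ v) = v ⬝ᵥ (M *ᵥ u) := fun u v => by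
    rw [dotProduct_mulVec, ← vecMul_transpose, ← conjTranspose_eq_transpose_of_trivial,
      hM.isHermitian.eq, dotProduct_comm]
  have hpos : 0 < (y - x₀) ⬝ᵥ (M *ᵥ (y - x₀)) := by
    simpa using hM.dotProduct_mulVec_pos (sub_ne_zero.2 hy)
  have hexpand : (y - x₀) ⬝ᵥ (M *ᵥ (y - x₀))
      = y ⬝ᵥ (M *ᵥ y) - 2 * (b ⬝ᵥ y) + x₀ ⬝ᵥ (M *ᵥ x₀) := by
    rw [mulVec_sub, sub_dotProduct, dotProduct_sub, dotProduct_sub, hsymm x₀ y, hx₀,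
      dotProduct_comm y b]
    ring
  have hb : b ⬝ᵥ x₀ = x₀ ⬝ᵥ (M *ᵥ x₀) := by rw [hx₀, dotProduct_comm]
  linarith

section PotentialMatrix

variable {ι : Type*} [Fintype ι] [DecidableEq ι] {G : Matrix ι ι ℝ}

theorem dotProduct_one_sub_smul_add_transpose_mulVec (c : ℝ) (x : ι → ℝ) :
    x ⬝ᵥ ((1 - c • (G + Gᵀ)) *ᵥ x) = x ⬝ᵥ x - 2 * c * (x ⬝ᵥ (G *ᵥ x)) := by
  have htranspose : x ⬝ᵥ (Gᵀ *ᵥ x) = x ⬝ᵥ (G *ᵥ x) := by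
    rw [dotProduct_mulVec, vecMul_transpose, dotProduct_comm]
  rw [sub_mulVec, one_mulVec, smul_mulVec, add_mulVec, dotProduct_sub, dotProduct_smul,
    dotProduct_add, htranspose, smul_eq_mul]
  ring

theorem posDef_one_sub_smul_add_transpose (hG : ∀ i j, |G i j| ≤ 1 / Fintype.card ι) {γ : ℝ}
    (hγ : |γ| < 1) : (1 - (γ / 2) • (G + Gᵀ)).PosDef := by
  have hherm : (1 - (γ / 2) • (G + Gᵀ)).IsHermitian := by
    ext i j
    simp [one_apply, add_comm, eq_comm]
  refine PosDef.of_dotProduct_mulVec_pos hherm fun x hx => ?_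
  have hxx : 0 < x ⬝ᵥ x := by simpa using dotProduct_self_star_pos_iff.2 hx
  have hcross : γ * (x ⬝ᵥ (G *ᵥ x)) ≤ |γ| * (x ⬝ᵥ x) :=
    calc γ * (x ⬝ᵥ (G *ᵥ x)) ≤ |γ| * |x ⬝ᵥ (G *ᵥ x)| := (le_abs_self _).trans_eq (abs_mul _ _)
      _ ≤ |γ| * (x ⬝ᵥ x) := by gcongr; exact abs_dotProduct_mulVec_le_of_abs_le hG x
  rw [star_trivial, dotProduct_one_sub_smul_add_transpose_mulVec]
  linarith [mul_lt_mul_of_pos_right hγ hxx]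

theorem one_sub_abs_mul_norm_le_of_mulVec_eq (hG : ∀ i j, |G i j| ≤ 1 / Fintype.card ι)
    {γ : ℝ} {x b : ι → ℝ} (hx : (1 - (γ / 2) • (G + Gᵀ)) *ᵥ x = b) :
    (1 - |γ|) * ‖x‖ ≤ ‖b‖ := by
  have hfixed : x = b + (γ / 2) • (G *ᵥ x + Gᵀ *ᵥ x) := by
    rw [← hx, sub_mulVec, one_mulVec, smul_mulVec, add_mulVec]
    abel
  have hGx := norm_mulVec_le_of_abs_le hG x
  have hGtx := norm_mulVec_le_of_abs_le (G := Gᵀ) (fun i j => hG j i) x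
  have hcontract : ‖x‖ ≤ ‖b‖ + |γ| * ‖x‖ :=
    calc ‖x‖ = ‖b + (γ / 2) • (G *ᵥ x + Gᵀ *ᵥ x)‖ := congrArg norm hfixed
      _ ≤ ‖b‖ + |γ| / 2 * (‖G *ᵥ x‖ + ‖Gᵀ *ᵥ x‖) := by
        refine (norm_add_le _ _).trans (add_le_add le_rfl ?_)
        rw [norm_smul, Real.norm_eq_abs, abs_div, abs_two]
        gcongr
        exact norm_add_le _ _
      _ ≤ ‖b‖ + |γ| * ‖x‖ := by nlinarith [abs_nonneg γ]
  linarith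

end PotentialMatrix

end Matrix

theorem unique_alpha_potential_maximizer_general
    {N : ℕ}
    (G : Matrix (Fin N) (Fin N) ℝ)
    (hGsmall : ∀ i j, |G i j| ≤ 1 / (N : ℝ))
    (γ : ℝ) (hγ : |γ| < 1 / 2)
    (β : Fin N → ℝ)
    (lo hi : Fin N → ℝ)
    (A : Set (Fin N → ℝ)) (hA : A = Set.univ.pi fun i => Set.Icc (lo i) (hi i))
    (atil : ℝ) (hatil : 0 ≤ atil)
    (hsub : ∀ i, Set.Icc (-atil) atil ⊆ Set.Icc (lo i) (hi i))
    (hβ : ∀ i, |β i| ≤ (1 - 2 * |γ|) * atil)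
    (φ : (Fin N → ℝ) → ℝ)
    (hφ : ∀ a, φ a = -(1/2) * ∑ i, a i ^ 2 + ∑ i, β i * a i
      + γ / 2 * ∑ i, (∑ j, G i j * a j) * a i)
    (aα : Fin N → ℝ) (haα : aα = (1 - (γ / 2) • (G + Gᵀ))⁻¹ *ᵥ β) :
    aα ∈ A ∧ ∀ a ∈ A, a ≠ aα → φ a < φ aα := by
  have hG : ∀ i j, |G i j| ≤ 1 / Fintype.card (Fin N) := by simpa using hGsmall
  set M := 1 - (γ / 2) • (G + Gᵀ)
  have hM : M.PosDef := posDef_one_sub_smul_add_transpose hG (by linarith)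
  have hMaα : M *ᵥ aα = β := by
    rw [haα, mulVec_mulVec, mul_nonsing_inv _ ((isUnit_iff_isUnit_det M).1 hM.isUnit),
      one_mulVec]
  have hnorm : ‖aα‖ ≤ atil := by
    have hβnorm : ‖β‖ ≤ (1 - 2 * |γ|) * atil :=
      (pi_norm_le_iff_of_nonneg (by nlinarith [abs_nonneg γ])).2 fun i => hβ i
    nlinarith [one_sub_abs_mul_norm_le_of_mulVec_eq hG hMaα, abs_nonneg γ, norm_nonneg aα]
  have hφM : ∀ a, φ a = β ⬝ᵥ a - a ⬝ᵥ (M *ᵥ a) / 2 := fun a => by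
    rw [hφ, dotProduct_one_sub_smul_add_transpose_mulVec, dotProduct_comm a (G *ᵥ a)]
    simp only [dotProduct, mulVec, sq]
    ring
  refine ⟨?_, fun a _ hne => ?_⟩
  · rw [hA]
    exact fun i _ => hsub i (abs_le.1 ((norm_le_pi_norm aα i).trans hnorm))
  · rw [hφM, hφM]
    exact hM.dotProduct_sub_half_dotProduct_mulVec_lt hMaα hne

/-- **Unique maximizer of the α-potential function.** In an LQ network game satisfying the
contraction assumption, the function
`φ(a) = −(1/2) Σ_i a_i² + Σ_i β_i a_i + (γ/2) Σ_i (Σ_j G_ij a_j) a_i` has a unique maximizer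
over `𝒜`, given by `a^α = (I − (γ/2)(G + Gᵀ))⁻¹ β`, and this point lies in `𝒜`. -/
theorem unique_alpha_potential_maximizer
    {N : ℕ} (hN : 0 < N)
    (G : Matrix (Fin N) (Fin N) ℝ)
    (hdiag : ∀ i, G i i = 0)
    (hGsmall : ∀ i j, |G i j| ≤ 1 / (N : ℝ))
    (γ : ℝ) (hγ : |γ| < 1 / 2)
    (β : Fin N → ℝ)
    (lo hi : Fin N → ℝ) (hlohi : ∀ i, lo i ≤ hi i)
    (A : Set (Fin N → ℝ)) (hA : A = Set.univ.pi fun i => Set.Icc (lo i) (hi i))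
    (atil : ℝ) (hatil : 0 ≤ atil)
    (hsub : ∀ i, Set.Icc (-atil) atil ⊆ Set.Icc (lo i) (hi i))
    (hβ : ∀ i, |β i| ≤ (1 - 2 * |γ|) * atil)
    (φ : (Fin N → ℝ) → ℝ)
    (hφ : ∀ a, φ a = -(1/2) * ∑ i, a i ^ 2 + ∑ i, β i * a i
      + γ / 2 * ∑ i, (∑ j, G i j * a j) * a i)
    (aα : Fin N → ℝ) (haα : aα = (1 - (γ / 2) • (G + Gᵀ))⁻¹ *ᵥ β) :
    aα ∈ A ∧ ∀ a ∈ A, a ≠ aα → φ a < φ aα :=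
  unique_alpha_potential_maximizer_general G hGsmall γ hγ β lo hi A hA atil hatil hsub hβ φ hφ aα
    haα
end

section
/- Consider an LQ network game satisfying the contraction assumption and let a^opt := (I − γ(G + Gᵀ))^{-1} β. Then SW(a^opt) ≤ ((1 − λ_min(γ(G + Gᵀ))) / (2 · (1 − λ_max(γ(G + Gᵀ)))²)) · ‖β‖₂². -/
/-!
Writing `S := γ (G + Gᵀ)`, the welfare is the concave quadratic
`SW(a) = β ⬝ a - ½ aᵀ (I - S) a`. By Gershgorin every eigenvalue of `S` has modulus at most
`N · 2|γ|/N = 2|γ| < 1`, so `m := 1 - λ_max(S) > 0` and `aᵀ (I - S) a ≥ m ‖a‖²`. Completing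
the square then gives `SW(a) ≤ ‖β‖² / (2m)` for every profile `a`, in particular for `a^opt`,
and `‖β‖² / (2m) ≤ (1 - λ_min(S)) ‖β‖² / (2m²)` because `m ≤ 1 - λ_min(S)`.
-/

open Matrix Finset

theorem Real.iInf_le_iSup_of_finite {ι : Type*} [Finite ι] (f : ι → ℝ) :
    ⨅ i, f i ≤ ⨆ i, f i := by
  cases isEmpty_or_nonempty ι
  · simp [Real.iInf_of_isEmpty, Real.iSup_of_isEmpty]
  · exact ciInf_le_ciSup (Set.finite_range f).bddBelow (Set.finite_range f).bddAbove

namespace Matrix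

variable {n : Type*} [Fintype n] [DecidableEq n]

theorem norm_le_card_mul_of_mem_spectrum {K : Type*} [NormedField K] {A : Matrix n n K}
    {c : ℝ} (hA : ∀ i j, ‖A i j‖ ≤ c) {μ : K} (hμ : μ ∈ spectrum K A) :
    ‖μ‖ ≤ Fintype.card n * c := by
  rw [← spectrum_toLin', ← Module.End.hasEigenvalue_iff_mem_spectrum] at hμ
  obtain ⟨k, hk⟩ := eigenvalue_mem_ball hμ
  rw [Metric.mem_closedBall, dist_eq_norm] at hk
  calc ‖μ‖ ≤ ‖A k k‖ + ‖μ - A k k‖ := norm_le_norm_add_norm_sub' μ (A k k)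
    _ ≤ ‖A k k‖ + ∑ j ∈ univ.erase k, ‖A k j‖ := by gcongr
    _ = ∑ j, ‖A k j‖ := add_sum_erase _ (fun j => ‖A k j‖) (mem_univ k)
    _ ≤ ∑ _j : n, c := sum_le_sum fun j _ => hA k j
    _ = Fintype.card n * c := by simp

theorem IsHermitian.dotProduct_mulVec_le_iSup_eigenvalues_mul {A : Matrix n n ℝ}
    (hA : A.IsHermitian) (x : n → ℝ) :
    x ⬝ᵥ (A *ᵥ x) ≤ (⨆ i, hA.eigenvalues i) * (x ⬝ᵥ x) := by
  set c := ⨆ i, hA.eigenvalues i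
  have hpsd : (algebraMap ℝ (Matrix n n ℝ) c - A).PosSemidef := by
    rw [posSemidef_iff_isHermitian_and_spectrum_nonneg, ← spectrum.singleton_sub_eq,
      hA.spectrum_real_eq_range_eigenvalues]
    refine ⟨(IsSelfAdjoint.algebraMap _ (IsSelfAdjoint.all c)).sub hA, ?_⟩
    rintro _ ⟨_, rfl, _, ⟨i, rfl⟩, rfl⟩
    exact sub_nonneg.mpr (le_ciSup (Set.finite_range hA.eigenvalues).bddAbove i)
  have := hpsd.dotProduct_mulVec_nonneg x
  rwa [Algebra.algebraMap_eq_smul_one, sub_mulVec, smul_mulVec, one_mulVec, dotProduct_sub,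
    dotProduct_smul, smul_eq_mul, star_trivial, sub_nonneg] at this

end Matrix

theorem iSup_eigenvalues_smul_add_transpose_le {n : Type*} [Fintype n] [DecidableEq n]
    {G : Matrix n n ℝ} (hG : ∀ i j, |G i j| ≤ 1 / (Fintype.card n : ℝ)) {γ : ℝ}
    (hS : (γ • (G + Gᵀ)).IsHermitian) :
    ⨆ i, hS.eigenvalues i ≤ 2 * |γ| := by
  set N : ℝ := (Fintype.card n : ℝ)
  have hentry : ∀ i j, ‖(γ • (G + Gᵀ)) i j‖ ≤ |γ| * (2 / N) := fun i j => by
    simp only [Matrix.smul_apply, Matrix.add_apply, transpose_apply, smul_eq_mul,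
      Real.norm_eq_abs, abs_mul]
    gcongr
    linarith [abs_add_le (G i j) (G j i), hG i j, hG j i, (by ring : 2 / N = 1 / N + 1 / N)]
  have hcard : N * (|γ| * (2 / N)) ≤ 2 * |γ| := by
    obtain hN | hN := (show (0 : ℝ) ≤ N by positivity).eq_or_lt
    · simp [← hN]
    · exact (by field_simp : N * (|γ| * (2 / N)) = 2 * |γ|).le
  refine Real.iSup_le (fun i => ?_) (by positivity)
  calc hS.eigenvalues i ≤ ‖hS.eigenvalues i‖ := le_abs_self _
    _ ≤ N * (|γ| * (2 / N)) :=
        norm_le_card_mul_of_mem_spectrum hentry (hS.eigenvalues_mem_spectrum_real i)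
    _ ≤ 2 * |γ| := hcard

theorem dotProduct_sub_half_quadratic_le {n : Type*} [Fintype n] {M : Matrix n n ℝ} {m : ℝ}
    (hm : 0 < m) (hM : ∀ x, m * (x ⬝ᵥ x) ≤ x ⬝ᵥ (M *ᵥ x)) (b a : n → ℝ) :
    b ⬝ᵥ a - a ⬝ᵥ (M *ᵥ a) / 2 ≤ b ⬝ᵥ b / (2 * m) := by
  have hsq : 0 ≤ (b - m • a) ⬝ᵥ (b - m • a) := by
    simpa using dotProduct_self_star_nonneg (b - m • a)
  simp only [sub_dotProduct, dotProduct_sub, smul_dotProduct, dotProduct_smul, smul_eq_mul,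
    dotProduct_comm a b] at hsq
  rw [le_div_iff₀ (by positivity)]
  nlinarith [hM a]

theorem lq_welfare_eq_quadratic {n : Type*} [Fintype n] [DecidableEq n] (G : Matrix n n ℝ)
    (γ : ℝ) (β a : n → ℝ) :
    ∑ i, (-(1/2) * a i ^ 2 + β i * a i + γ * (∑ j, G i j * a j) * a i)
      = β ⬝ᵥ a - a ⬝ᵥ ((1 - γ • (G + Gᵀ)) *ᵥ a) / 2 := by
  have hsum : ∑ i, (-(1/2) * a i ^ 2 + β i * a i + γ * (∑ j, G i j * a j) * a i)
      = -(1/2) * (a ⬝ᵥ a) + β ⬝ᵥ a + γ * (a ⬝ᵥ (G *ᵥ a)) := by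
    simp only [dotProduct, mulVec]
    rw [mul_sum, mul_sum, ← sum_add_distrib, ← sum_add_distrib]
    exact sum_congr rfl fun i _ => by ring
  have hsymm : a ⬝ᵥ (Gᵀ *ᵥ a) = a ⬝ᵥ (G *ᵥ a) := by
    rw [dotProduct_mulVec, vecMul_transpose, dotProduct_comm]
  rw [hsum, sub_mulVec, one_mulVec, smul_mulVec, add_mulVec, dotProduct_sub, dotProduct_smul,
    dotProduct_add, hsymm, smul_eq_mul]
  ring

theorem social_optimum_welfare_upper_bound_general
    {N : ℕ}
    (G : Matrix (Fin N) (Fin N) ℝ)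
    (hGsmall : ∀ i j, |G i j| ≤ 1 / (N : ℝ))
    (γ : ℝ) (hγ : |γ| < 1 / 2)
    (β : Fin N → ℝ)
    (u : Fin N → (Fin N → ℝ) → ℝ)
    (hu : ∀ i a, u i a = -(1/2) * a i ^ 2 + β i * a i + γ * (∑ j, G i j * a j) * a i)
    (SW : (Fin N → ℝ) → ℝ) (hSW : ∀ a, SW a = ∑ i, u i a)
    (aopt : Fin N → ℝ)
    (hS : (γ • (G + Gᵀ)).IsHermitian) :
    SW aopt ≤ (1 - ⨅ i, hS.eigenvalues i) / (2 * (1 - ⨆ i, hS.eigenvalues i) ^ 2)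
      * ∑ i, β i ^ 2 := by
  set lmin := ⨅ i, hS.eigenvalues i
  set lmax := ⨆ i, hS.eigenvalues i
  have hlmax : lmax ≤ 2 * |γ| :=
    iSup_eigenvalues_smul_add_transpose_le (by simpa using hGsmall) hS
  have hm : 0 < 1 - lmax := by linarith
  have hcoercive : ∀ x, (1 - lmax) * (x ⬝ᵥ x) ≤ x ⬝ᵥ ((1 - γ • (G + Gᵀ)) *ᵥ x) := fun x => by
    rw [sub_mulVec, one_mulVec, dotProduct_sub]
    linarith [hS.dotProduct_mulVec_le_iSup_eigenvalues_mul x]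
  have hlmin : 1 - lmax ≤ 1 - lmin := by linarith [Real.iInf_le_iSup_of_finite hS.eigenvalues]
  calc SW aopt = β ⬝ᵥ aopt - aopt ⬝ᵥ ((1 - γ • (G + Gᵀ)) *ᵥ aopt) / 2 := by
        simp only [hSW, hu, lq_welfare_eq_quadratic]
    _ ≤ β ⬝ᵥ β / (2 * (1 - lmax)) := dotProduct_sub_half_quadratic_le hm hcoercive β aopt
    _ = (1 - lmax) / (2 * (1 - lmax) ^ 2) * ∑ i, β i ^ 2 := by
        simp only [dotProduct, ← sq]; field_simp
    _ ≤ (1 - lmin) / (2 * (1 - lmax) ^ 2) * ∑ i, β i ^ 2 := by gcongr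

/-- In an LQ network game satisfying the contraction assumption, with
`a^opt := (I − γ(G + Gᵀ))⁻¹ β`, one has
`SW(a^opt) ≤ ((1 − λ_min(γ(G + Gᵀ))) / (2·(1 − λ_max(γ(G + Gᵀ)))²)) · ‖β‖₂²`. -/
theorem social_optimum_welfare_upper_bound
    {N : ℕ} (hN : 0 < N)
    (G : Matrix (Fin N) (Fin N) ℝ)
    (hdiag : ∀ i, G i i = 0)
    (hGsmall : ∀ i j, |G i j| ≤ 1 / (N : ℝ))
    (γ : ℝ) (hγ : |γ| < 1 / 2)
    (β : Fin N → ℝ)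
    (lo hi : Fin N → ℝ) (hlohi : ∀ i, lo i ≤ hi i)
    (A : Set (Fin N → ℝ)) (hA : A = Set.univ.pi fun i => Set.Icc (lo i) (hi i))
    (atil : ℝ) (hatil : 0 ≤ atil)
    (hsub : ∀ i, Set.Icc (-atil) atil ⊆ Set.Icc (lo i) (hi i))
    (hβ : ∀ i, |β i| ≤ (1 - 2 * |γ|) * atil)
    (u : Fin N → (Fin N → ℝ) → ℝ)
    (hu : ∀ i a, u i a = -(1/2) * a i ^ 2 + β i * a i + γ * (∑ j, G i j * a j) * a i)
    (SW : (Fin N → ℝ) → ℝ) (hSW : ∀ a, SW a = ∑ i, u i a)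
    (aopt : Fin N → ℝ) (haopt : aopt = (1 - γ • (G + Gᵀ))⁻¹ *ᵥ β)
    (hS : (γ • (G + Gᵀ)).IsHermitian) :
    SW aopt ≤ (1 - ⨅ i, hS.eigenvalues i) / (2 * (1 - ⨆ i, hS.eigenvalues i) ^ 2)
      * ∑ i, β i ^ 2 :=
  social_optimum_welfare_upper_bound_general G hGsmall γ hγ β u hu SW hSW aopt hS
end

section
/- Consider an LQ network game satisfying the contraction assumption and let a^α := (I − (γ/2)(G + Gᵀ))^{-1} β. Then SW(a^α) = (1/2)‖a^α‖₂² and SW(a^α) ≥ ‖β‖₂² / (2 · (1 − λ_min(γ(G + Gᵀ))/2)²). -/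
/-!
Writing `M = I - S/2` with `S = γ(G + Gᵀ)`, the game's first-order condition `M a = β` turns the
linear term `β ⬝ a` of the welfare into `‖a‖² - γ a ⬝ G a`, which cancels the network term and
leaves `‖a‖²/2`. The contraction assumption bounds the quadratic form of `S` by `2|γ|‖x‖² < ‖x‖²`,
so `M` is positive definite and every eigenvalue of `S` is at most `1`. In an orthonormal
eigenbasis of `S` the matrix `M` acts diagonally with entries `1 - λᵢ/2 ∈ [0, 1 - λ_min/2]`,
hence `‖β‖ = ‖M a‖ ≤ (1 - λ_min/2)‖a‖`.
-/

open Matrix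

section

variable {ι : Type*} [Fintype ι]

theorem Matrix.abs_dotProduct_mulVec_le_of_abs_le_s18 (B : Matrix ι ι ℝ) {c : ℝ}
    (hB : ∀ i j, |B i j| ≤ c) (x : ι → ℝ) :
    |x ⬝ᵥ (B *ᵥ x)| ≤ c * Fintype.card ι * (x ⬝ᵥ x) := by
  rcases isEmpty_or_nonempty ι with hι | ⟨⟨i₀⟩⟩
  · simp
  have hc : 0 ≤ c := (abs_nonneg _).trans (hB i₀ i₀)
  calc |x ⬝ᵥ (B *ᵥ x)| = |∑ i, ∑ j, x i * (B i j * x j)| := by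
        simp only [dotProduct, mulVec, Finset.mul_sum]
    _ ≤ ∑ i, ∑ j, |x i| * (c * |x j|) := by
        refine (Finset.abs_sum_le_sum_abs _ _).trans (Finset.sum_le_sum fun i _ => ?_)
        refine (Finset.abs_sum_le_sum_abs _ _).trans (Finset.sum_le_sum fun j _ => ?_)
        rw [abs_mul, abs_mul]
        gcongr
        exact hB i j
    _ = c * (∑ i, |x i|) ^ 2 := by
        rw [sq, Finset.sum_mul_sum, Finset.mul_sum]
        refine Finset.sum_congr rfl fun i _ => ?_
        rw [Finset.mul_sum]
        exact Finset.sum_congr rfl fun j _ => by ring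
    _ ≤ c * (Fintype.card ι * ∑ i, |x i| ^ 2) := by
        gcongr
        simpa using sq_sum_le_card_mul_sum_sq (s := Finset.univ) (f := fun i => |x i|)
    _ = c * Fintype.card ι * (x ⬝ᵥ x) := by
        simp only [dotProduct, sq_abs, ← sq, mul_assoc]

theorem Matrix.dotProduct_add_transpose_mulVec (B : Matrix ι ι ℝ) (x : ι → ℝ) :
    x ⬝ᵥ ((B + Bᵀ) *ᵥ x) = 2 * (x ⬝ᵥ (B *ᵥ x)) := by
  rw [add_mulVec, dotProduct_add, dotProduct_mulVec x Bᵀ, vecMul_transpose, dotProduct_comm]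
  ring

theorem OrthonormalBasis.dotProduct_self_eq_sum_sq
    (e : OrthonormalBasis ι ℝ (EuclideanSpace ℝ ι)) (x : ι → ℝ) :
    x ⬝ᵥ x = ∑ i, (⇑(e i) ⬝ᵥ x) ^ 2 := by
  have := e.sum_inner_mul_inner (WithLp.toLp 2 x) (WithLp.toLp 2 x)
  simp only [EuclideanSpace.inner_eq_star_dotProduct, star_trivial] at this
  rw [← this]
  simp only [dotProduct_comm x, sq]

theorem Matrix.IsSymm.dotProduct_mulVec_self_le {A : Matrix ι ι ℝ} (hA : A.IsSymm)
    (e : OrthonormalBasis ι ℝ (EuclideanSpace ℝ ι)) {μ : ι → ℝ}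
    (he : ∀ i, A *ᵥ ⇑(e i) = μ i • ⇑(e i)) {C : ℝ} (hμ : ∀ i, μ i ^ 2 ≤ C) (x : ι → ℝ) :
    (A *ᵥ x) ⬝ᵥ (A *ᵥ x) ≤ C * (x ⬝ᵥ x) := by
  have hcoord : ∀ i, ⇑(e i) ⬝ᵥ (A *ᵥ x) = μ i * (⇑(e i) ⬝ᵥ x) := fun i => by
    rw [dotProduct_mulVec, ← mulVec_transpose, hA.eq, he, smul_dotProduct, smul_eq_mul]
  rw [e.dotProduct_self_eq_sum_sq, e.dotProduct_self_eq_sum_sq x, Finset.mul_sum]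
  refine Finset.sum_le_sum fun i _ => ?_
  rw [hcoord, mul_pow]
  exact mul_le_mul_of_nonneg_right (hμ i) (sq_nonneg _)

theorem dotProduct_smul_add_transpose_mulVec_le (G : Matrix ι ι ℝ)
    (hG : ∀ i j, |G i j| ≤ 1 / (Fintype.card ι : ℝ)) (γ : ℝ) (x : ι → ℝ) :
    x ⬝ᵥ ((γ • (G + Gᵀ)) *ᵥ x) ≤ 2 * |γ| * (x ⬝ᵥ x) := by
  have hGx : |x ⬝ᵥ (G *ᵥ x)| ≤ x ⬝ᵥ x :=
    (G.abs_dotProduct_mulVec_le_of_abs_le_s18 hG x).trans <| mul_le_of_le_one_left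
      (by simpa using dotProduct_self_star_nonneg x)
      (by rw [one_div_mul_eq_div]; exact div_self_le_one _)
  rw [smul_mulVec, dotProduct_smul, dotProduct_add_transpose_mulVec, smul_eq_mul]
  calc γ * (2 * (x ⬝ᵥ (G *ᵥ x))) = 2 * (γ * (x ⬝ᵥ (G *ᵥ x))) := by ring
    _ ≤ 2 * (|γ| * (x ⬝ᵥ x)) := by
        gcongr 2 * ?_
        calc γ * (x ⬝ᵥ (G *ᵥ x)) ≤ |γ| * |x ⬝ᵥ (G *ᵥ x)| := (le_abs_self _).trans (abs_mul _ _).le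
          _ ≤ |γ| * (x ⬝ᵥ x) := by gcongr
    _ = 2 * |γ| * (x ⬝ᵥ x) := by ring

variable [DecidableEq ι]

theorem Matrix.IsHermitian.eigenvalues_le_of_dotProduct_mulVec_le {S : Matrix ι ι ℝ}
    (hS : S.IsHermitian) {C : ℝ} (hC : ∀ x, x ⬝ᵥ (S *ᵥ x) ≤ C * (x ⬝ᵥ x)) (i : ι) :
    hS.eigenvalues i ≤ C := by
  have hunit : ⇑(hS.eigenvectorBasis i) ⬝ᵥ ⇑(hS.eigenvectorBasis i) = 1 := by
    simpa only [EuclideanSpace.inner_eq_star_dotProduct, star_trivial] using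
      hS.eigenvectorBasis.inner_eq_one i
  simpa [hS.eigenvalues_eq i, hunit] using hC (hS.eigenvectorBasis i)

theorem Matrix.IsHermitian.posDef_one_sub_half_smul {S : Matrix ι ι ℝ} (hS : S.IsHermitian)
    {C : ℝ} (hC : ∀ x, x ⬝ᵥ (S *ᵥ x) ≤ C * (x ⬝ᵥ x)) (hC2 : C < 2) :
    (1 - (2⁻¹ : ℝ) • S).PosDef := by
  refine PosDef.of_dotProduct_mulVec_pos (isHermitian_one.sub (hS.smul (.all _))) fun x hx => ?_
  have hxx : 0 < x ⬝ᵥ x := by simpa using dotProduct_star_self_pos_iff.mpr hx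
  rw [star_trivial, sub_mulVec, one_mulVec, smul_mulVec, dotProduct_sub, dotProduct_smul,
    smul_eq_mul]
  nlinarith [hC x]

theorem Matrix.IsHermitian.dotProduct_one_sub_half_smul_mulVec_le {S : Matrix ι ι ℝ}
    (hS : S.IsHermitian) (hS2 : ∀ i, hS.eigenvalues i ≤ 2) (x : ι → ℝ) :
    ((1 - (2⁻¹ : ℝ) • S) *ᵥ x) ⬝ᵥ ((1 - (2⁻¹ : ℝ) • S) *ᵥ x)
      ≤ (1 - (⨅ i, hS.eigenvalues i) / 2) ^ 2 * (x ⬝ᵥ x) := by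
  refine IsSymm.dotProduct_mulVec_self_le (isSymm_one.sub ((isHermitian_iff_isSymm.mp hS).smul _))
    hS.eigenvectorBasis (μ := fun i => 1 - hS.eigenvalues i / 2) (fun i => ?_) (fun i => ?_) x
  · rw [sub_mulVec, one_mulVec, smul_mulVec, hS.mulVec_eigenvectorBasis, smul_smul,
      sub_smul, one_smul, div_eq_inv_mul]
  · have hmin : ⨅ j, hS.eigenvalues j ≤ hS.eigenvalues i :=
      ciInf_le (Set.finite_range _).bddBelow i
    exact pow_le_pow_left₀ (by linarith [hS2 i]) (by linarith) 2

theorem sum_lq_utility_eq_half_dotProduct_self (G : Matrix ι ι ℝ) (γ : ℝ)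
    (a : ι → ℝ) :
    ∑ i, (-(1/2) * a i ^ 2 + ((1 - (γ / 2) • (G + Gᵀ)) *ᵥ a) i * a i
      + γ * (∑ j, G i j * a j) * a i) = 1 / 2 * (a ⬝ᵥ a) := by
  have hβ : ∑ i, ((1 - (γ / 2) • (G + Gᵀ)) *ᵥ a) i * a i = a ⬝ᵥ a - γ * (a ⬝ᵥ (G *ᵥ a)) := by
    rw [← dotProduct, dotProduct_comm, sub_mulVec, one_mulVec, smul_mulVec, dotProduct_sub,
      dotProduct_smul, dotProduct_add_transpose_mulVec, smul_eq_mul]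
    ring
  have hG : ∑ i, γ * (∑ j, G i j * a j) * a i = γ * (a ⬝ᵥ (G *ᵥ a)) := by
    rw [dotProduct_comm]
    simp only [mul_assoc, ← Finset.mul_sum, dotProduct, mulVec]
  simp only [Finset.sum_add_distrib, hβ, hG, ← Finset.mul_sum, dotProduct, sq]
  ring

end

theorem alpha_potential_maximizer_welfare_lower_bound_general
    {N : ℕ}
    (G : Matrix (Fin N) (Fin N) ℝ)
    (hGsmall : ∀ i j, |G i j| ≤ 1 / (N : ℝ))
    (γ : ℝ) (hγ : |γ| < 1 / 2)
    (β : Fin N → ℝ)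
    (u : Fin N → (Fin N → ℝ) → ℝ)
    (hu : ∀ i a, u i a = -(1/2) * a i ^ 2 + β i * a i + γ * (∑ j, G i j * a j) * a i)
    (SW : (Fin N → ℝ) → ℝ) (hSW : ∀ a, SW a = ∑ i, u i a)
    (aα : Fin N → ℝ) (haα : aα = (1 - (γ / 2) • (G + Gᵀ))⁻¹ *ᵥ β)
    (hS : (γ • (G + Gᵀ)).IsHermitian) :
    SW aα = 1 / 2 * ∑ i, aα i ^ 2 ∧
    (∑ i, β i ^ 2) / (2 * (1 - (⨅ i, hS.eigenvalues i) / 2) ^ 2) ≤ SW aα := by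
  have hM : 1 - (γ / 2) • (G + Gᵀ) = 1 - (2⁻¹ : ℝ) • (γ • (G + Gᵀ)) := by
    rw [smul_smul, div_eq_inv_mul]
  have hquad := dotProduct_smul_add_transpose_mulVec_le G (by simpa using hGsmall) γ
  have hMβ : (1 - (γ / 2) • (G + Gᵀ)) *ᵥ aα = β := by
    have hPD := hS.posDef_one_sub_half_smul hquad (by linarith)
    rw [haα, mulVec_mulVec, mul_nonsing_inv _ (hM ▸ hPD).det_pos.ne'.isUnit, one_mulVec]
  have hwelfare : SW aα = 1 / 2 * (aα ⬝ᵥ aα) := by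
    simp only [hSW, hu, ← hMβ]
    exact sum_lq_utility_eq_half_dotProduct_self G γ aα
  have hβ : β ⬝ᵥ β ≤ (1 - (⨅ i, hS.eigenvalues i) / 2) ^ 2 * (aα ⬝ᵥ aα) := by
    rw [← hMβ, hM]
    exact hS.dotProduct_one_sub_half_smul_mulVec_le
      (fun i => (hS.eigenvalues_le_of_dotProduct_mulVec_le hquad i).trans (by linarith)) aα
  have hsq : ∀ x : Fin N → ℝ, ∑ i, x i ^ 2 = x ⬝ᵥ x := fun x => by simp only [dotProduct, sq]
  rw [hsq, hsq, hwelfare]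
  refine ⟨rfl, div_le_of_le_mul₀ (by positivity) ?_ (by linarith)⟩
  simpa using dotProduct_self_star_nonneg aα

/-- In an LQ network game satisfying the contraction assumption, with
`a^α := (I − (γ/2)(G + Gᵀ))⁻¹ β`, one has `SW(a^α) = (1/2)‖a^α‖₂²` and
`SW(a^α) ≥ ‖β‖₂² / (2·(1 − λ_min(γ(G + Gᵀ))/2)²)`. -/
theorem alpha_potential_maximizer_welfare_lower_bound
    {N : ℕ} (hN : 0 < N)
    (G : Matrix (Fin N) (Fin N) ℝ)
    (hdiag : ∀ i, G i i = 0)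
    (hGsmall : ∀ i j, |G i j| ≤ 1 / (N : ℝ))
    (γ : ℝ) (hγ : |γ| < 1 / 2)
    (β : Fin N → ℝ)
    (lo hi : Fin N → ℝ) (hlohi : ∀ i, lo i ≤ hi i)
    (A : Set (Fin N → ℝ)) (hA : A = Set.univ.pi fun i => Set.Icc (lo i) (hi i))
    (atil : ℝ) (hatil : 0 ≤ atil)
    (hsub : ∀ i, Set.Icc (-atil) atil ⊆ Set.Icc (lo i) (hi i))
    (hβ : ∀ i, |β i| ≤ (1 - 2 * |γ|) * atil)
    (u : Fin N → (Fin N → ℝ) → ℝ)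
    (hu : ∀ i a, u i a = -(1/2) * a i ^ 2 + β i * a i + γ * (∑ j, G i j * a j) * a i)
    (SW : (Fin N → ℝ) → ℝ) (hSW : ∀ a, SW a = ∑ i, u i a)
    (aα : Fin N → ℝ) (haα : aα = (1 - (γ / 2) • (G + Gᵀ))⁻¹ *ᵥ β)
    (hS : (γ • (G + Gᵀ)).IsHermitian) :
    SW aα = 1 / 2 * ∑ i, aα i ^ 2 ∧
    (∑ i, β i ^ 2) / (2 * (1 - (⨅ i, hS.eigenvalues i) / 2) ^ 2) ≤ SW aα :=
  alpha_potential_maximizer_welfare_lower_bound_general G hGsmall γ hγ β u hu SW hSW aα haα hS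
end

section
/- (Welfare suboptimality.) Consider an LQ network game satisfying the contraction assumption with β ≠ 0, and let a^opt := (I − γ(G + Gᵀ))^{-1} β (the unique maximizer of SW over 𝒜) and a^α := (I − (γ/2)(G + Gᵀ))^{-1} β (the unique maximizer over 𝒜 of the function φ(a) = −(1/2) Σ_i a_i² + Σ_i β_i a_i + (γ/2) Σ_i (Σ_j G_ij a_j) a_i). Then SW(a^α) > 0 and SW(a^opt)/SW(a^α) ≤ (1 − λ_min(γ(G + Gᵀ))) · (1 − λ_min(γ(G + Gᵀ))/2)² / (1 − λ_max(γ(G + Gᵀ)))² ≤ (1 + |γ| · max_i (Σ_{j≠i} |G_ij| + Σ_{j≠i} |G_ji|))³ / (1 − |γ| · max_i (Σ_{j≠i} |G_ij| + Σ_{j≠i} |G_ji|))² ≤ (1 + 2|γ|)³ / (1 − 2|γ|)². -/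
/-!
Social welfare is the concave quadratic `SW a = β ⬝ a - a ⬝ (1 - S) a / 2` with
`S = γ (G + Gᵀ)`. In an orthonormal eigenbasis of `S`, with `c` the coordinates of `β`, the two
points `(1 - S)⁻¹ β` and `(1 - S / 2)⁻¹ β` have welfare `∑ cᵢ² / (1 - λᵢ) / 2` and
`∑ cᵢ² / (1 - λᵢ / 2)² / 2`, so the ratio is bounded term by term through the extreme eigenvalues.
Gershgorin's theorem (the diagonal of `S` vanishes) puts every eigenvalue in `[-|γ| m, |γ| m]`,
and `|G i j| ≤ 1 / N` gives `m ≤ 2`.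
-/

open Matrix

noncomputable def quadPayoff {n : Type*} [Fintype n] (P : Matrix n n ℝ) (β a : n → ℝ) : ℝ :=
  β ⬝ᵥ a - a ⬝ᵥ (P *ᵥ a) / 2

lemma one_div_le_mul_one_div_sq {μ lmin lmax : ℝ} (hμ : μ ∈ Set.Icc lmin lmax) (hlmax : lmax < 1) :
    1 / (1 - μ) ≤ (1 - lmin) * (1 - lmin / 2) ^ 2 / (1 - lmax) ^ 2 * (1 / (1 - μ / 2) ^ 2) := by
  obtain ⟨hmin, hmax⟩ := hμ
  have h1 : 0 < 1 - lmax := by linarith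
  have h2 : 0 < 1 - μ / 2 := by linarith
  rw [mul_one_div, div_div, div_le_div_iff₀ (by linarith) (by positivity), one_mul]
  have hfirst : (1 - lmax) ^ 2 ≤ (1 - lmin) * (1 - μ) := by
    rw [sq]; exact mul_le_mul (by linarith) (by linarith) h1.le (by linarith)
  have hsecond : (1 - μ / 2) ^ 2 ≤ (1 - lmin / 2) ^ 2 := by gcongr
  calc (1 - lmax) ^ 2 * (1 - μ / 2) ^ 2 ≤ (1 - lmin) * (1 - μ) * (1 - lmin / 2) ^ 2 :=
        mul_le_mul hfirst hsecond (by positivity) (mul_nonneg (by linarith) (by linarith))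
    _ = (1 - lmin) * (1 - lmin / 2) ^ 2 * (1 - μ) := by ring

lemma sum_div_le_mul_sum_div_sq {ι : Type*} [Fintype ι] {w μ : ι → ℝ} {lmin lmax : ℝ}
    (hw : ∀ i, 0 ≤ w i) (hμ : ∀ i, μ i ∈ Set.Icc lmin lmax) (hlmax : lmax < 1) :
    ∑ i, w i / (1 - μ i)
      ≤ (1 - lmin) * (1 - lmin / 2) ^ 2 / (1 - lmax) ^ 2 * ∑ i, w i / (1 - μ i / 2) ^ 2 := by
  rw [Finset.mul_sum]
  refine Finset.sum_le_sum fun i _ => ?_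
  have := mul_le_mul_of_nonneg_left (one_div_le_mul_one_div_sq (hμ i) hlmax) (hw i)
  convert this using 1 <;> ring

lemma div_le_one_add_pow_three_div_one_sub_sq {lmin lmax ρ : ℝ} (hmin : -ρ ≤ lmin)
    (hle : lmin ≤ lmax) (hmax : lmax ≤ ρ) (hρ : ρ < 1) :
    (1 - lmin) * (1 - lmin / 2) ^ 2 / (1 - lmax) ^ 2 ≤ (1 + ρ) ^ 3 / (1 - ρ) ^ 2 := by
  have hnum : (1 - lmin) * (1 - lmin / 2) ^ 2 ≤ (1 + ρ) ^ 3 := by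
    rw [pow_succ' _ 2]
    gcongr <;> linarith
  exact div_le_div₀ (pow_nonneg (by linarith) 3) hnum (pow_pos (by linarith) 2)
    (by gcongr)

lemma one_add_pow_three_div_one_sub_sq_mono {ρ r : ℝ} (hρ : 0 ≤ ρ) (hρr : ρ ≤ r) (hr : r < 1) :
    (1 + ρ) ^ 3 / (1 - ρ) ^ 2 ≤ (1 + r) ^ 3 / (1 - r) ^ 2 :=
  div_le_div₀ (pow_nonneg (by linarith) 3) (by gcongr) (pow_pos (by linarith) 2)
    (by gcongr)

namespace Matrix

variable {n : Type*} [Fintype n]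

lemma dotProduct_mulVec_eq_star_mulVec_dotProduct (x y : n → ℝ) (U : Matrix n n ℝ) :
    x ⬝ᵥ (U *ᵥ y) = (star U *ᵥ x) ⬝ᵥ y := by
  rw [dotProduct_mulVec, star_eq_conjTranspose, conjTranspose_eq_transpose_of_trivial,
    mulVec_transpose]

variable [DecidableEq n]

lemma quadPayoff_conj_diagonal {U : Matrix n n ℝ} (hU : U ∈ unitaryGroup n ℝ) (d β a : n → ℝ) :
    quadPayoff (U * diagonal d * star U) β a
      = ∑ i, ((star U *ᵥ β) i * (star U *ᵥ a) i - d i * (star U *ᵥ a) i ^ 2 / 2) := by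
  have ha : U *ᵥ (star U *ᵥ a) = a := by
    rw [mulVec_mulVec, Unitary.mul_star_self_of_mem hU, one_mulVec]
  have hlin : β ⬝ᵥ a = (star U *ᵥ β) ⬝ᵥ (star U *ᵥ a) := by
    rw [← dotProduct_mulVec_eq_star_mulVec_dotProduct, ha]
  have hquad : a ⬝ᵥ ((U * diagonal d * star U) *ᵥ a)
      = (star U *ᵥ a) ⬝ᵥ (diagonal d *ᵥ (star U *ᵥ a)) := by
    rw [← mulVec_mulVec, ← mulVec_mulVec, dotProduct_mulVec_eq_star_mulVec_dotProduct]
  rw [quadPayoff, hlin, hquad, dotProduct, dotProduct, Finset.sum_div, ← Finset.sum_sub_distrib]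
  simp only [mulVec_diagonal]
  ring_nf

lemma inv_conj_diagonal {U : Matrix n n ℝ} (hU : U ∈ unitaryGroup n ℝ) {d : n → ℝ}
    (hd : ∀ i, d i ≠ 0) : (U * diagonal d * star U)⁻¹ = U * diagonal d⁻¹ * star U := by
  refine inv_eq_right_inv ?_
  calc U * diagonal d * star U * (U * diagonal d⁻¹ * star U)
      = U * (diagonal d * (star U * U) * diagonal d⁻¹) * star U := by
        simp only [Matrix.mul_assoc]
    _ = 1 := by
        rw [Unitary.star_mul_self_of_mem hU, Matrix.mul_one, diagonal_mul_diagonal]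
        simp [mul_inv_cancel₀ (hd _), Unitary.mul_star_self_of_mem hU]

lemma quadPayoff_conj_diagonal_inv_mulVec {U : Matrix n n ℝ} (hU : U ∈ unitaryGroup n ℝ)
    {d e : n → ℝ} (he : ∀ i, e i ≠ 0) (β : n → ℝ) :
    quadPayoff (U * diagonal d * star U) β ((U * diagonal e * star U)⁻¹ *ᵥ β)
      = ∑ i, (star U *ᵥ β) i ^ 2 * (e i - d i / 2) / e i ^ 2 := by
  have hcoord : star U *ᵥ ((U * diagonal e * star U)⁻¹ *ᵥ β) = fun i => (star U *ᵥ β) i / e i := by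
    rw [inv_conj_diagonal hU he, ← mulVec_mulVec, ← mulVec_mulVec, mulVec_mulVec _ (star U) U,
      Unitary.star_mul_self_of_mem hU, one_mulVec]
    ext i
    simp [mulVec_diagonal, div_eq_mul_inv, mul_comm]
  rw [quadPayoff_conj_diagonal hU, hcoord]
  refine Finset.sum_congr rfl fun i _ => ?_
  field_simp [he i]

lemma abs_le_of_hasEigenvalue {S : Matrix n n ℝ} {μ ρ : ℝ}
    (hμ : Module.End.HasEigenvalue (toLin' S) μ)
    (hρ : ∀ k, |S k k| + ∑ j ∈ Finset.univ.erase k, |S k j| ≤ ρ) : |μ| ≤ ρ := by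
  obtain ⟨k, hk⟩ := eigenvalue_mem_ball hμ
  rw [Metric.mem_closedBall, Real.dist_eq] at hk
  simp only [Real.norm_eq_abs] at hk
  calc |μ| ≤ |S k k| + |μ - S k k| := by simpa using abs_add_le (S k k) (μ - S k k)
    _ ≤ ρ := by linarith [hρ k]

namespace IsHermitian

variable {S : Matrix n n ℝ}

lemma hasEigenvalue_toLin'_eigenvalues (hS : S.IsHermitian) (i : n) :
    Module.End.HasEigenvalue (toLin' S) (hS.eigenvalues i) :=
  Module.End.hasEigenvalue_iff_mem_spectrum.mpr <| by
    rw [spectrum_toLin']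
    exact hS.eigenvalues_mem_spectrum_real i

lemma one_sub_smul_eq_conj_diagonal (hS : S.IsHermitian) (t : ℝ) :
    1 - t • S = hS.eigenvectorUnitary * diagonal (fun i => 1 - t * hS.eigenvalues i)
      * star (hS.eigenvectorUnitary : Matrix n n ℝ) := by
  have hspec := hS.spectral_theorem
  rw [Unitary.conjStarAlgAut_apply] at hspec
  have hdiag : diagonal (fun i => 1 - t * hS.eigenvalues i)
      = 1 - t • diagonal (RCLike.ofReal ∘ hS.eigenvalues) := by
    ext i j
    by_cases h : i = j <;> simp [h]
  rw [hdiag, Matrix.mul_sub, Matrix.sub_mul, Matrix.mul_one,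
    Unitary.mul_star_self_of_mem hS.eigenvectorUnitary.2, Matrix.mul_smul, Matrix.smul_mul,
    ← hspec]

lemma quadPayoff_inv_one_sub_smul_mulVec (hS : S.IsHermitian) {t : ℝ}
    (ht : ∀ i, t * hS.eigenvalues i ≠ 1) (β : n → ℝ) :
    quadPayoff (1 - S) β ((1 - t • S)⁻¹ *ᵥ β)
      = ∑ i, (star (hS.eigenvectorUnitary : Matrix n n ℝ) *ᵥ β) i ^ 2
          * (1 - (2 * t - 1) * hS.eigenvalues i) / (2 * (1 - t * hS.eigenvalues i) ^ 2) := by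
  have hne : ∀ i, 1 - t * hS.eigenvalues i ≠ 0 := fun i => sub_ne_zero.mpr (ht i).symm
  have h1 : 1 - S = hS.eigenvectorUnitary * diagonal (fun i => 1 - 1 * hS.eigenvalues i)
      * star (hS.eigenvectorUnitary : Matrix n n ℝ) := by
    rw [← hS.one_sub_smul_eq_conj_diagonal, one_smul]
  rw [h1, hS.one_sub_smul_eq_conj_diagonal,
    quadPayoff_conj_diagonal_inv_mulVec hS.eigenvectorUnitary.2 hne]
  refine Finset.sum_congr rfl fun i _ => ?_
  field_simp
  ring

lemma star_eigenvectorUnitary_mulVec_ne_zero (hS : S.IsHermitian) {β : n → ℝ} (hβ : β ≠ 0) :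
    star (hS.eigenvectorUnitary : Matrix n n ℝ) *ᵥ β ≠ 0 := by
  intro h
  apply hβ
  rw [← one_mulVec β, ← Unitary.mul_star_self_of_mem hS.eigenvectorUnitary.2, ← mulVec_mulVec, h,
    mulVec_zero]

theorem quadPayoff_ratio_le (hS : S.IsHermitian) {β : n → ℝ} (hβ : β ≠ 0) {lmin lmax : ℝ}
    (heig : ∀ i, hS.eigenvalues i ∈ Set.Icc lmin lmax) (hlmax : lmax < 1) :
    0 < quadPayoff (1 - S) β ((1 - (1 / 2 : ℝ) • S)⁻¹ *ᵥ β) ∧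
      quadPayoff (1 - S) β ((1 - S)⁻¹ *ᵥ β) / quadPayoff (1 - S) β ((1 - (1 / 2 : ℝ) • S)⁻¹ *ᵥ β)
        ≤ (1 - lmin) * (1 - lmin / 2) ^ 2 / (1 - lmax) ^ 2 := by
  set c := star (hS.eigenvectorUnitary : Matrix n n ℝ) *ᵥ β
  have hlt : ∀ i, hS.eigenvalues i < 1 := fun i => (heig i).2.trans_lt hlmax
  have hgap : ∀ i, 0 < 1 - hS.eigenvalues i := fun i => sub_pos.mpr (hlt i)
  have hgap_half : ∀ i, 0 < 1 - hS.eigenvalues i / 2 := fun i => by linarith [hlt i]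
  have hopt : quadPayoff (1 - S) β ((1 - S)⁻¹ *ᵥ β)
      = (∑ i, c i ^ 2 / (1 - hS.eigenvalues i)) / 2 := by
    have h := hS.quadPayoff_inv_one_sub_smul_mulVec (t := 1) (fun i => by linarith [hlt i]) β
    rw [one_smul] at h
    rw [h, Finset.sum_div]
    refine Finset.sum_congr rfl fun i _ => ?_
    have := (hgap i).ne'
    field_simp
    ring
  have hα : quadPayoff (1 - S) β ((1 - (1 / 2 : ℝ) • S)⁻¹ *ᵥ β)
      = (∑ i, c i ^ 2 / (1 - hS.eigenvalues i / 2) ^ 2) / 2 := by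
    rw [hS.quadPayoff_inv_one_sub_smul_mulVec (fun i => by linarith [hlt i]), Finset.sum_div]
    refine Finset.sum_congr rfl fun i _ => ?_
    have := (hgap_half i).ne'
    field_simp
    ring
  have hpos : 0 < ∑ i, c i ^ 2 / (1 - hS.eigenvalues i / 2) ^ 2 := by
    obtain ⟨i, hi⟩ := Function.ne_iff.mp (hS.star_eigenvectorUnitary_mulVec_ne_zero hβ)
    refine Finset.sum_pos' (fun j _ => by positivity) ⟨i, Finset.mem_univ i, ?_⟩
    have hci : c i ≠ 0 := hi
    have := hgap_half i
    positivity
  refine ⟨by rw [hα]; positivity, ?_⟩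
  rw [hopt, hα, div_div_div_cancel_right₀ two_ne_zero, div_le_iff₀ hpos]
  exact sum_div_le_mul_sum_div_sq (fun i => sq_nonneg (c i)) heig hlmax

end IsHermitian
end Matrix

section LQGame

variable {n : Type*} [Fintype n] [DecidableEq n]

def offDiagAbsSum (G : Matrix n n ℝ) (k : n) : ℝ :=
  (∑ j ∈ Finset.univ.erase k, |G k j|) + ∑ j ∈ Finset.univ.erase k, |G j k|

lemma sum_lq_utility_eq_quadPayoff (G : Matrix n n ℝ) (γ : ℝ) (β a : n → ℝ) :
    ∑ i, (-(1 / 2) * a i ^ 2 + β i * a i + γ * (∑ j, G i j * a j) * a i)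
      = quadPayoff (1 - γ • (G + Gᵀ)) β a := by
  have hGt : a ⬝ᵥ (Gᵀ *ᵥ a) = a ⬝ᵥ (G *ᵥ a) := by
    rw [mulVec_transpose, dotProduct_comm, ← dotProduct_mulVec]
  rw [quadPayoff, sub_mulVec, one_mulVec, smul_mulVec, add_mulVec, dotProduct_sub,
    dotProduct_smul, dotProduct_add, hGt]
  simp only [dotProduct, mulVec, smul_eq_mul, Finset.sum_add_distrib, Finset.mul_sum,
    Finset.sum_mul]
  ring_nf
  simp only [Finset.mul_sum, Finset.sum_mul]
  ring_nf

lemma sum_erase_abs_le_one {f : n → ℝ} (hf : ∀ j, |f j| ≤ 1 / (Fintype.card n : ℝ)) (i : n) :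
    ∑ j ∈ Finset.univ.erase i, |f j| ≤ 1 :=
  calc ∑ j ∈ Finset.univ.erase i, |f j| ≤ ∑ j, |f j| :=
        Finset.sum_le_sum_of_subset_of_nonneg (Finset.erase_subset _ _) fun j _ _ => abs_nonneg _
    _ ≤ Fintype.card n * (1 / (Fintype.card n : ℝ)) :=
        (Finset.sum_le_card_nsmul _ _ _ fun j _ => hf j).trans_eq
          (by rw [Finset.card_univ, nsmul_eq_mul])
    _ ≤ 1 := by
        rw [mul_one_div]; exact div_self_le_one _

lemma iSup_offDiagAbsSum_le_two {G : Matrix n n ℝ}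
    (hG : ∀ i j, |G i j| ≤ 1 / (Fintype.card n : ℝ)) :
    ⨆ k, offDiagAbsSum G k ≤ 2 :=
  Real.iSup_le (fun k => by
    rw [offDiagAbsSum]
    linarith [sum_erase_abs_le_one (hG k) k, sum_erase_abs_le_one (fun j => hG j k) k])
    zero_le_two

lemma abs_eigenvalues_smul_add_transpose_le {G : Matrix n n ℝ} (hdiag : ∀ i, G i i = 0) {γ : ℝ}
    (hS : (γ • (G + Gᵀ)).IsHermitian) (i : n) :
    |hS.eigenvalues i| ≤ |γ| * ⨆ k, offDiagAbsSum G k := by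
  refine abs_le_of_hasEigenvalue (hS.hasEigenvalue_toLin'_eigenvalues i) fun k => ?_
  calc |(γ • (G + Gᵀ)) k k| + ∑ j ∈ Finset.univ.erase k, |(γ • (G + Gᵀ)) k j|
      = |γ| * ∑ j ∈ Finset.univ.erase k, |G k j + G j k| := by
        simp [hdiag, abs_mul, Finset.mul_sum]
    _ ≤ |γ| * offDiagAbsSum G k := by
        rw [offDiagAbsSum, ← Finset.sum_add_distrib]
        gcongr with j
        exact abs_add_le _ _
    _ ≤ |γ| * ⨆ k, offDiagAbsSum G k := by
        gcongr
        exact le_ciSup (Finite.bddAbove_range _) k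

end LQGame

theorem welfare_suboptimality_general
    {N : ℕ}
    (G : Matrix (Fin N) (Fin N) ℝ)
    (hdiag : ∀ i, G i i = 0)
    (hGsmall : ∀ i j, |G i j| ≤ 1 / (N : ℝ))
    (γ : ℝ) (hγ : |γ| < 1 / 2)
    (β : Fin N → ℝ) (hβne : β ≠ 0)
    (u : Fin N → (Fin N → ℝ) → ℝ)
    (hu : ∀ i a, u i a = -(1/2) * a i ^ 2 + β i * a i + γ * (∑ j, G i j * a j) * a i)
    (SW : (Fin N → ℝ) → ℝ) (hSW : ∀ a, SW a = ∑ i, u i a)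
    (aopt : Fin N → ℝ) (haopt : aopt = (1 - γ • (G + Gᵀ))⁻¹ *ᵥ β)
    (aα : Fin N → ℝ) (haα : aα = (1 - (γ / 2) • (G + Gᵀ))⁻¹ *ᵥ β)
    (hS : (γ • (G + Gᵀ)).IsHermitian)
    (lmin lmax : ℝ) (hlmin : lmin = ⨅ i, hS.eigenvalues i)
    (hlmax : lmax = ⨆ i, hS.eigenvalues i)
    (m : ℝ)
    (hm : m = ⨆ i : Fin N,
      ((∑ j ∈ Finset.univ.erase i, |G i j|) + ∑ j ∈ Finset.univ.erase i, |G j i|)) :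
    0 < SW aα ∧
    SW aopt / SW aα ≤ (1 - lmin) * (1 - lmin / 2) ^ 2 / (1 - lmax) ^ 2 ∧
    (1 - lmin) * (1 - lmin / 2) ^ 2 / (1 - lmax) ^ 2
      ≤ (1 + |γ| * m) ^ 3 / (1 - |γ| * m) ^ 2 ∧
    (1 + |γ| * m) ^ 3 / (1 - |γ| * m) ^ 2 ≤ (1 + 2 * |γ|) ^ 3 / (1 - 2 * |γ|) ^ 2 := by
  obtain ⟨i₀⟩ : Nonempty (Fin N) :=
    not_isEmpty_iff.mp fun _ => hβne (Subsingleton.elim _ _)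
  have : Nonempty (Fin N) := ⟨i₀⟩
  have hSW' : SW = quadPayoff (1 - γ • (G + Gᵀ)) β := funext fun a => by
    simp only [hSW, hu]
    exact sum_lq_utility_eq_quadPayoff G γ β a
  replace hm : m = ⨆ k, offDiagAbsSum G k := hm
  have hρ : ∀ i, |hS.eigenvalues i| ≤ |γ| * m :=
    hm ▸ abs_eigenvalues_smul_add_transpose_le hdiag hS
  have hρ2 : |γ| * m ≤ 2 * |γ| := by
    rw [mul_comm 2]
    gcongr
    exact hm ▸ iSup_offDiagAbsSum_le_two (by simpa using hGsmall)
  have heig : ∀ i, hS.eigenvalues i ∈ Set.Icc lmin lmax := fun i =>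
    ⟨hlmin ▸ ciInf_le (Finite.bddBelow_range _) i, hlmax ▸ le_ciSup (Finite.bddAbove_range _) i⟩
  have hmin : -(|γ| * m) ≤ lmin := hlmin ▸ le_ciInf fun i => (abs_le.mp (hρ i)).1
  have hmax : lmax ≤ |γ| * m := hlmax ▸ ciSup_le fun i => (abs_le.mp (hρ i)).2
  have hhalf : (γ / 2) • (G + Gᵀ) = (1 / 2 : ℝ) • (γ • (G + Gᵀ)) := by
    rw [smul_smul, div_eq_inv_mul, one_div]
  obtain ⟨hpos, hratio⟩ := hS.quadPayoff_ratio_le hβne heig (by linarith)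
  rw [hSW', haopt, haα, hhalf]
  exact ⟨hpos, hratio,
    div_le_one_add_pow_three_div_one_sub_sq hmin ((heig i₀).1.trans (heig i₀).2) hmax
      (by linarith),
    one_add_pow_three_div_one_sub_sq_mono ((abs_nonneg _).trans (hρ i₀)) hρ2 (by linarith)⟩

/-- **Welfare suboptimality.** In an LQ network game satisfying the contraction assumption with
`β ≠ 0`, let `a^opt := (I − γ(G + Gᵀ))⁻¹ β` (the unique maximizer of `SW` over `𝒜`) and
`a^α := (I − (γ/2)(G + Gᵀ))⁻¹ β` (the unique maximizer of the `α`-potential function over `𝒜`).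
Then `SW(a^α) > 0` and
`SW(a^opt)/SW(a^α) ≤ (1 − λ_min)·(1 − λ_min/2)²/(1 − λ_max)²
  ≤ (1 + |γ|·max_i(Σ_{j≠i}|G_ij| + Σ_{j≠i}|G_ji|))³ / (1 − |γ|·max_i(Σ_{j≠i}|G_ij| + Σ_{j≠i}|G_ji|))²
  ≤ (1 + 2|γ|)³/(1 − 2|γ|)²`,
where `λ_min, λ_max` are the extreme eigenvalues of `γ(G + Gᵀ)`. -/
theorem welfare_suboptimality
    {N : ℕ} (hN : 0 < N)
    (G : Matrix (Fin N) (Fin N) ℝ)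
    (hdiag : ∀ i, G i i = 0)
    (hGsmall : ∀ i j, |G i j| ≤ 1 / (N : ℝ))
    (γ : ℝ) (hγ : |γ| < 1 / 2)
    (β : Fin N → ℝ) (hβne : β ≠ 0)
    (lo hi : Fin N → ℝ) (hlohi : ∀ i, lo i ≤ hi i)
    (A : Set (Fin N → ℝ)) (hA : A = Set.univ.pi fun i => Set.Icc (lo i) (hi i))
    (atil : ℝ) (hatil : 0 ≤ atil)
    (hsub : ∀ i, Set.Icc (-atil) atil ⊆ Set.Icc (lo i) (hi i))
    (hβ : ∀ i, |β i| ≤ (1 - 2 * |γ|) * atil)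
    (u : Fin N → (Fin N → ℝ) → ℝ)
    (hu : ∀ i a, u i a = -(1/2) * a i ^ 2 + β i * a i + γ * (∑ j, G i j * a j) * a i)
    (SW : (Fin N → ℝ) → ℝ) (hSW : ∀ a, SW a = ∑ i, u i a)
    (aopt : Fin N → ℝ) (haopt : aopt = (1 - γ • (G + Gᵀ))⁻¹ *ᵥ β)
    (aα : Fin N → ℝ) (haα : aα = (1 - (γ / 2) • (G + Gᵀ))⁻¹ *ᵥ β)
    (hS : (γ • (G + Gᵀ)).IsHermitian)
    (lmin lmax : ℝ) (hlmin : lmin = ⨅ i, hS.eigenvalues i)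
    (hlmax : lmax = ⨆ i, hS.eigenvalues i)
    (m : ℝ)
    (hm : m = ⨆ i : Fin N,
      ((∑ j ∈ Finset.univ.erase i, |G i j|) + ∑ j ∈ Finset.univ.erase i, |G j i|)) :
    0 < SW aα ∧
    SW aopt / SW aα ≤ (1 - lmin) * (1 - lmin / 2) ^ 2 / (1 - lmax) ^ 2 ∧
    (1 - lmin) * (1 - lmin / 2) ^ 2 / (1 - lmax) ^ 2
      ≤ (1 + |γ| * m) ^ 3 / (1 - |γ| * m) ^ 2 ∧
    (1 + |γ| * m) ^ 3 / (1 - |γ| * m) ^ 2 ≤ (1 + 2 * |γ|) ^ 3 / (1 - 2 * |γ|) ^ 2 :=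
  welfare_suboptimality_general G hdiag hGsmall γ hγ β hβne u hu SW hSW aopt haopt aα haα hS lmin
    lmax hlmin hlmax m hm
end
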